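/- arXiv:2402.04757 — 6 statements merged into one kernel-verified Lean document; each statement's English description precedes it below -/
import Mathlib

section
/- For h > 0 and the system τ' = 1 + kμ, μ' = −kτ with k(τ,μ) = (2(τ² + h²(1+μ²))τ + (h²−1)(1+μ²)μ)/((1+r²)(h²+r²)), if a solution satisfies τ(s₀) = 0 at some s₀, then τ'(s₀) = h²(1 + μ(s₀)²)/(h² + μ(s₀)²) > 0. Consequently τ has at most one zero, and if it has a zero s₀, then τ < 0 on (−∞, s₀) and τ > 0 on (s₀, +∞). -/
/-!
At a zero of `τ` the first equation reads `τ' = 1 + k μ = h²(1 + μ²)/(h² + μ²) > 0`.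
A continuous function whose derivative is positive at each of its zeros crosses zero at most
once: by continuous induction it stays nonnegative after a zero, and a later zero would make it
negative just before. Before a zero it is negative, since a nonnegative value there would give,
by the intermediate value theorem, an earlier zero.
-/

open Filter Set Topology SignType

/-- The curvature function of the generating curve of an `h`-pitched helicoidal
rotator to MCF in `ℍ²×ℝ`. -/
noncomputable def kF (h τ μ : ℝ) : ℝ :=
  (2 * (τ ^ 2 + h ^ 2 * (1 + μ ^ 2)) * τ + (h ^ 2 - 1) * (1 + μ ^ 2) * μ) /
    ((1 + (τ ^ 2 + μ ^ 2)) * (h ^ 2 + (τ ^ 2 + μ ^ 2)))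

/-- `(τ, μ)` is a (global) solution of the rotator ODE system
`τ′ = 1 + kμ`, `μ′ = −kτ`. -/
def IsSol (h : ℝ) (τ μ : ℝ → ℝ) : Prop :=
  ∀ s : ℝ,
    HasDerivAt τ (1 + kF h (τ s) (μ s) * μ s) s ∧
    HasDerivAt μ (-(kF h (τ s) (μ s) * τ s)) s

section SignNearZeros

variable {f : ℝ → ℝ} {a b x : ℝ}

lemma eventually_pos_nhdsGT_of_deriv_pos (hf : 0 < deriv f a) (ha : f a = 0) :
    ∀ᶠ y in 𝓝[>] a, 0 < f y := by
  filter_upwards [nhdsWithin_le_nhds (eventually_nhdsWithin_sign_eq_of_deriv_pos hf ha),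
    self_mem_nhdsWithin] with y hy (hay : a < y)
  rwa [sign_pos (sub_pos.mpr hay), sign_eq_one_iff] at hy

lemma eventually_neg_nhdsLT_of_deriv_pos (hf : 0 < deriv f a) (ha : f a = 0) :
    ∀ᶠ y in 𝓝[<] a, f y < 0 := by
  filter_upwards [nhdsWithin_le_nhds (eventually_nhdsWithin_sign_eq_of_deriv_pos hf ha),
    self_mem_nhdsWithin] with y hy (hya : y < a)
  rwa [sign_neg (sub_neg.mpr hya), sign_eq_neg_one_iff] at hy

lemma nonneg_of_le_of_forall_deriv_pos (hc : Continuous f) (hd : ∀ y, f y = 0 → 0 < deriv f y)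
    (ha : f a = 0) (hax : a ≤ x) : 0 ≤ f x := by
  have hsub : Icc a x ⊆ {y | 0 ≤ f y} := by
    refine ((isClosed_le continuous_const hc).inter isClosed_Icc)
      |>.Icc_subset_of_forall_mem_nhdsWithin ha.ge fun y ⟨hy, _⟩ => ?_
    rcases (show (0 : ℝ) ≤ f y from hy).eq_or_lt with hy0 | hy0
    · exact (eventually_pos_nhdsGT_of_deriv_pos (hd y hy0.symm) hy0.symm).mono fun _ => le_of_lt
    · exact nhdsWithin_le_nhds ((hc.tendsto y).eventually (eventually_gt_nhds hy0) |>.mono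
        fun _ => le_of_lt)
  exact hsub ⟨hax, le_rfl⟩

lemma pos_of_lt_of_forall_deriv_pos (hc : Continuous f) (hd : ∀ y, f y = 0 → 0 < deriv f y)
    (ha : f a = 0) (hax : a < x) : 0 < f x := by
  refine (nonneg_of_le_of_forall_deriv_pos hc hd ha hax.le).lt_of_ne' fun hx => ?_
  obtain ⟨y, hy, hay⟩ := ((eventually_neg_nhdsLT_of_deriv_pos (hd x hx) hx).and
    (Ioo_mem_nhdsLT hax)).exists
  exact hy.not_ge (nonneg_of_le_of_forall_deriv_pos hc hd ha hay.1.le)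

lemma neg_of_lt_of_forall_deriv_pos (hc : Continuous f) (hd : ∀ y, f y = 0 → 0 < deriv f y)
    (hb : f b = 0) (hxb : x < b) : f x < 0 := by
  by_contra! hx
  suffices ∃ z < b, f z = 0 by
    obtain ⟨z, hzb, hz⟩ := this
    exact (pos_of_lt_of_forall_deriv_pos hc hd hz hzb).ne' hb
  rcases hx.eq_or_lt with hx0 | hx0
  · exact ⟨x, hxb, hx0.symm⟩
  obtain ⟨y, hy, hxy, hyb⟩ := ((eventually_neg_nhdsLT_of_deriv_pos (hd b hb) hb).and
    (Ioo_mem_nhdsLT hxb)).exists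
  obtain ⟨z, hz, hz0⟩ := intermediate_value_Icc' hxy.le hc.continuousOn ⟨hy.le, hx0.le⟩
  exact ⟨z, hz.2.trans_lt hyb, hz0⟩

end SignNearZeros

/-- At `τ = 0` the curvature term reduces to `k μ = (h² - 1) μ² / (h² + μ²)`. -/
lemma one_add_kF_zero_mul {h : ℝ} (hh : h ≠ 0) (μ : ℝ) :
    1 + kF h 0 μ * μ = h ^ 2 * (1 + μ ^ 2) / (h ^ 2 + μ ^ 2) := by
  have : h ^ 2 + μ ^ 2 ≠ 0 := by positivity
  unfold kF
  field_simp
  ring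

namespace IsSol

variable {h : ℝ} {τ μ : ℝ → ℝ}

lemma continuous_tau (hsol : IsSol h τ μ) : Continuous τ :=
  continuous_iff_continuousAt.mpr fun s => (hsol s).1.continuousAt

lemma deriv_tau_of_eq_zero (hsol : IsSol h τ μ) (hh : h ≠ 0) {s : ℝ} (hs : τ s = 0) :
    deriv τ s = h ^ 2 * (1 + μ s ^ 2) / (h ^ 2 + μ s ^ 2) := by
  rw [(hsol s).1.deriv, hs, one_add_kF_zero_mul hh]

end IsSol

/-- along a solution, if `τ(s₀) = 0` then
`τ′(s₀) = h²(1 + μ(s₀)²)/(h² + μ(s₀)²) > 0`; consequently `τ` has at most one zero,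
being negative before it and positive after it. -/
theorem tau_zero_behaviour (h : ℝ) (hh : 0 < h) (τ μ : ℝ → ℝ)
    (hsol : IsSol h τ μ) (s₀ : ℝ) (hzero : τ s₀ = 0) :
    deriv τ s₀ = h ^ 2 * (1 + μ s₀ ^ 2) / (h ^ 2 + μ s₀ ^ 2) ∧
    0 < deriv τ s₀ ∧
    (∀ s : ℝ, s < s₀ → τ s < 0) ∧
    (∀ s : ℝ, s₀ < s → 0 < τ s) := by
  have hderiv : ∀ s, τ s = 0 → deriv τ s = h ^ 2 * (1 + μ s ^ 2) / (h ^ 2 + μ s ^ 2) :=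
    fun s => hsol.deriv_tau_of_eq_zero hh.ne'
  have hpos : ∀ s, τ s = 0 → 0 < deriv τ s := fun s hs => by
    rw [hderiv s hs]; positivity
  exact ⟨hderiv s₀ hzero, hpos s₀ hzero,
    fun _ hs => neg_of_lt_of_forall_deriv_pos hsol.continuous_tau hpos hzero hs,
    fun _ hs => pos_of_lt_of_forall_deriv_pos hsol.continuous_tau hpos hzero hs⟩
end

section
/- Let h > 0 and k(τ, μ) = (2(τ² + h²(1+μ²))τ + (h²−1)(1+μ²)μ)/((1+r²)(h²+r²)) with r² = τ² + μ². Along any solution of τ' = 1 + kμ, μ' = −kτ, if k vanishes at some s₁, then the derivative of s ↦ k(τ(s), μ(s)) at s₁ equals (6τ²(s₁) + 2h²(1 + μ²(s₁)))/((1 + r²(s₁))(h² + r²(s₁))) > 0. Hence along any solution, k has at most one zero, being negative before it and positive after. -/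
open Filter

/-!
At a zero of `k` the ODE reduces to `τ' = 1`, `μ' = 0`, and the numerator of `k` vanishes, so
the derivative of `k` along the solution is the `τ`-derivative `6τ² + 2h²(1 + μ²)` of the
numerator divided by the positive denominator.

A continuous function whose derivative is positive at each of its zeros crosses zero only
upwards, so after one zero it never returns to `0`: at the first zero after a positive value it
would have to be negative just before.
-/

open Topology Set

section SignChange

variable {f : ℝ → ℝ} {x y : ℝ}

lemma eventually_pos_nhdsGT_of_deriv_pos_s8 (hx : f x = 0) (hD : 0 < deriv f x) :
    ∀ᶠ t in 𝓝[>] x, 0 < f t := by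
  have hslope : Tendsto (slope f x) (𝓝[>] x) (𝓝 (deriv f x)) :=
    (differentiableAt_of_deriv_ne_zero hD.ne').hasDerivAt.tendsto_slope.mono_left
      (nhdsGT_le_nhdsNE x)
  filter_upwards [hslope.eventually_const_lt hD, self_mem_nhdsWithin] with t ht htx
  rw [slope_def_field, hx, sub_zero] at ht
  exact (div_pos_iff_of_pos_right (sub_pos.2 htx)).1 ht

lemma eventually_neg_nhdsLT_of_deriv_pos_s8 (hx : f x = 0) (hD : 0 < deriv f x) :
    ∀ᶠ t in 𝓝[<] x, f t < 0 := by
  have hslope : Tendsto (slope f x) (𝓝[<] x) (𝓝 (deriv f x)) :=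
    (differentiableAt_of_deriv_ne_zero hD.ne').hasDerivAt.tendsto_slope.mono_left
      (nhdsLT_le_nhdsNE x)
  filter_upwards [hslope.eventually_const_lt hD, self_mem_nhdsWithin] with t ht htx
  rw [slope_def_field, hx, sub_zero] at ht
  exact ((div_pos_iff.1 ht).resolve_left fun h => h.2.not_gt (sub_neg.2 htx)).1

lemma pos_of_zero_of_lt (hc : Continuous f) (hd : ∀ x, f x = 0 → 0 < deriv f x)
    (hx : f x = 0) (hxy : x < y) : 0 < f y := by
  by_contra! hy
  obtain ⟨t₀, hft₀, ht₀⟩ :=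
    ((eventually_pos_nhdsGT_of_deriv_pos_s8 hx (hd x hx)).and (Ioo_mem_nhdsGT hxy)).exists
  -- `f t₀ > 0 ≥ f y`; at the first zero `c` of `f` on `[t₀, y]`, `f` is negative just before
  -- `c`, which produces an earlier zero
  have hzeros : (Icc t₀ y ∩ f ⁻¹' {0}).Nonempty := by
    obtain ⟨c, hcI, hfc⟩ :=
      intermediate_value_Icc' ht₀.2.le hc.continuousOn ⟨hy, hft₀.le⟩
    exact ⟨c, hcI, hfc⟩
  obtain ⟨c, ⟨hcI, hfc⟩, hleast⟩ :=
    (isCompact_Icc.inter_right (isClosed_eq hc continuous_const)).exists_isLeast hzeros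
  have ht₀c : t₀ < c := hcI.1.lt_of_ne (by rintro rfl; exact hft₀.ne' hfc)
  obtain ⟨t, hft, ht⟩ :=
    ((eventually_neg_nhdsLT_of_deriv_pos_s8 hfc (hd c hfc)).and (Ioo_mem_nhdsLT ht₀c)).exists
  obtain ⟨z, hz, hfz⟩ := intermediate_value_Icc' ht.1.le hc.continuousOn ⟨hft.le, hft₀.le⟩
  exact (hleast ⟨⟨hz.1, hz.2.trans (ht.2.le.trans hcI.2)⟩, hfz⟩).not_gt (hz.2.trans_lt ht.2)

lemma neg_of_zero_of_lt (hc : Continuous f) (hd : ∀ x, f x = 0 → 0 < deriv f x)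
    (hx : f x = 0) (hyx : y < x) : f y < 0 := by
  have hg := pos_of_zero_of_lt (f := fun u => -f (-u)) (x := -x) (y := -y)
    (by fun_prop) (fun u hu => ?_) (by simpa using hx) (neg_lt_neg hyx)
  · simpa using hg
  · rw [deriv.fun_neg, deriv_comp_neg, neg_neg]
    exact hd (-u) (neg_eq_zero.1 hu)

end SignChange

lemma HasDerivAt.div_of_eq_zero {𝕜 : Type*} [NontriviallyNormedField 𝕜] {N D : 𝕜 → 𝕜}
    {N' x : 𝕜} (hN : HasDerivAt N N' x) (hD : DifferentiableAt 𝕜 D x) (hNx : N x = 0)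
    (hDx : D x ≠ 0) : HasDerivAt (fun t => N t / D t) (N' / D x) x := by
  refine (hN.div hD.hasDerivAt hDx).congr_deriv ?_
  rw [hNx, zero_mul, sub_zero, sq, mul_div_mul_right _ _ hDx]

lemma kF_den_pos {h : ℝ} (hh : h ≠ 0) (τ μ : ℝ) :
    0 < (1 + (τ ^ 2 + μ ^ 2)) * (h ^ 2 + (τ ^ 2 + μ ^ 2)) := by
  positivity

lemma hasDerivAt_kF_comp_of_kF_eq_zero {h : ℝ} (hh : h ≠ 0) {τ μ : ℝ → ℝ} {s : ℝ}
    (hτ : HasDerivAt τ 1 s) (hμ : HasDerivAt μ 0 s) (hz : kF h (τ s) (μ s) = 0) :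
    HasDerivAt (fun t => kF h (τ t) (μ t))
      ((6 * τ s ^ 2 + 2 * h ^ 2 * (1 + μ s ^ 2)) /
        ((1 + (τ s ^ 2 + μ s ^ 2)) * (h ^ 2 + (τ s ^ 2 + μ s ^ 2)))) s := by
  have hden := kF_den_pos hh (τ s) (μ s)
  have hnum := (div_eq_zero_iff.1 hz).resolve_right hden.ne'
  have hτd := hτ.differentiableAt
  have hμd := hμ.differentiableAt
  have hN : HasDerivAt
      (fun t =>
        2 * (τ t ^ 2 + h ^ 2 * (1 + μ t ^ 2)) * τ t + (h ^ 2 - 1) * (1 + μ t ^ 2) * μ t)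
      (6 * τ s ^ 2 + 2 * h ^ 2 * (1 + μ s ^ 2)) s := by
    refine ((((hτ.fun_pow 2).fun_add (((hμ.fun_pow 2).const_add 1).const_mul (h ^ 2))).const_mul
      2).fun_mul hτ).fun_add ((((hμ.fun_pow 2).const_add 1).const_mul (h ^ 2 - 1)).fun_mul hμ)
      |>.congr_deriv ?_
    ring
  exact hN.div_of_eq_zero (by fun_prop) hnum hden.ne'

lemma IsSol.hasDerivAt_kF_of_kF_eq_zero {h : ℝ} (hh : h ≠ 0) {τ μ : ℝ → ℝ}
    (hsol : IsSol h τ μ) {s : ℝ} (hz : kF h (τ s) (μ s) = 0) :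
    HasDerivAt (fun t => kF h (τ t) (μ t))
      ((6 * τ s ^ 2 + 2 * h ^ 2 * (1 + μ s ^ 2)) /
        ((1 + (τ s ^ 2 + μ s ^ 2)) * (h ^ 2 + (τ s ^ 2 + μ s ^ 2)))) s := by
  obtain ⟨hτ, hμ⟩ := hsol s
  rw [hz] at hτ hμ
  exact hasDerivAt_kF_comp_of_kF_eq_zero hh (by simpa using hτ) (by simpa using hμ) hz

lemma IsSol.continuous_kF {h : ℝ} (hh : h ≠ 0) {τ μ : ℝ → ℝ} (hsol : IsSol h τ μ) :
    Continuous fun s => kF h (τ s) (μ s) := by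
  have hτ : Continuous τ := continuous_iff_continuousAt.2 fun s => (hsol s).1.continuousAt
  have hμ : Continuous μ := continuous_iff_continuousAt.2 fun s => (hsol s).2.continuousAt
  exact (by fun_prop : Continuous _).div (by fun_prop) fun s => (kF_den_pos hh (τ s) (μ s)).ne'

/-- along a solution, if the curvature `k` vanishes at `s₁`, then the
derivative of `s ↦ k(τ(s), μ(s))` at `s₁` equals
`(6τ(s₁)² + 2h²(1 + μ(s₁)²))/((1 + r²(s₁))(h² + r²(s₁))) > 0`; hence `k` has at most
one zero along the solution, being negative before it and positive after it. -/
theorem k_zero_behaviour (h : ℝ) (hh : 0 < h) (τ μ : ℝ → ℝ)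
    (hsol : IsSol h τ μ) (s₁ : ℝ) (hzero : kF h (τ s₁) (μ s₁) = 0) :
    deriv (fun s => kF h (τ s) (μ s)) s₁ =
      (6 * τ s₁ ^ 2 + 2 * h ^ 2 * (1 + μ s₁ ^ 2)) /
        ((1 + (τ s₁ ^ 2 + μ s₁ ^ 2)) * (h ^ 2 + (τ s₁ ^ 2 + μ s₁ ^ 2))) ∧
    0 < deriv (fun s => kF h (τ s) (μ s)) s₁ ∧
    (∀ s : ℝ, s < s₁ → kF h (τ s) (μ s) < 0) ∧
    (∀ s : ℝ, s₁ < s → 0 < kF h (τ s) (μ s)) := by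
  have hderiv_pos :
      ∀ s, kF h (τ s) (μ s) = 0 → 0 < deriv (fun s => kF h (τ s) (μ s)) s := by
    intro s hs
    rw [(hsol.hasDerivAt_kF_of_kF_eq_zero hh.ne' hs).deriv]
    exact div_pos (by positivity) (kF_den_pos hh.ne' _ _)
  have hcont := hsol.continuous_kF hh.ne'
  exact ⟨(hsol.hasDerivAt_kF_of_kF_eq_zero hh.ne' hzero).deriv, hderiv_pos s₁ hzero,
    fun s hs => neg_of_zero_of_lt (f := fun s => kF h (τ s) (μ s)) hcont hderiv_pos hzero hs,
    fun s hs => pos_of_zero_of_lt (f := fun s => kF h (τ s) (μ s)) hcont hderiv_pos hzero hs⟩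
end

section
/- For h > 0 and any global solution (τ, μ) of the system τ' = 1 + kμ, μ' = −kτ with k(τ,μ) = (2(τ² + h²(1+μ²))τ + (h²−1)(1+μ²)μ)/((1+r²)(h²+r²)), r² = τ² + μ², the function r²(s) = τ(s)² + μ(s)² has exactly one critical point (a global minimum) and satisfies r²(s) → +∞ as s → ±∞. -/
open Filter Set

lemma growth {f f' : ℝ → ℝ} (hf : ∀ s, HasDerivAt f (f' s) s) {u v c : ℝ} (huv : u ≤ v)
    (hc : ∀ t, u ≤ t → t ≤ v → c ≤ f' t) : f u + c * (v - u) ≤ f v := by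
  have hg : ∀ t, HasDerivAt (fun t => f t - c * t) (f' t - c) t := fun t =>
    (hf t).sub (by simpa using (hasDerivAt_id t).const_mul c)
  have hdiff : Differentiable ℝ (fun t => f t - c * t) := fun t => (hg t).differentiableAt
  have hmono : MonotoneOn (fun t => f t - c * t) (Icc u v) := by
    apply monotoneOn_of_deriv_nonneg (convex_Icc u v) hdiff.continuous.continuousOn
      hdiff.differentiableOn
    intro x hx
    rw [interior_Icc] at hx
    rw [(hg x).deriv]
    have := hc x hx.1.le hx.2.le
    linarith
  have := hmono ⟨le_refl u, huv⟩ ⟨huv, le_refl v⟩ huv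
  simp only at this
  linarith

lemma growth' {f f' : ℝ → ℝ} (hf : ∀ s, HasDerivAt f (f' s) s) {u v C : ℝ} (huv : u ≤ v)
    (hC : ∀ t, u ≤ t → t ≤ v → f' t ≤ C) : f v ≤ f u + C * (v - u) := by
  have := growth (f := fun t => -f t) (f' := fun t => -f' t) (fun s => (hf s).neg) huv
    (c := -C) (fun t h1 h2 => show -C ≤ -f' t by have := hC t h1 h2; linarith)
  linarith

lemma no_upcross {f f' : ℝ → ℝ} (hf : ∀ s, HasDerivAt f (f' s) s)
    {u v d : ℝ} (hv : f v < d)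
    (hder : ∀ t, u ≤ t → t ≤ v → f t = d → 0 < f' t) :
    ∀ t, u ≤ t → t ≤ v → f t < d := by
  have hcont : Continuous f := Differentiable.continuous (fun t => (hf t).differentiableAt)
  intro t hut htv
  by_contra hle
  push_neg at hle
  have htv' : t < v := by
    rcases lt_or_eq_of_le htv with h | h
    · exact h
    · exact absurd (h ▸ hle) (not_le.2 hv)
  have hTc : IsCompact (Icc t v ∩ f ⁻¹' (Ici d)) :=
    isCompact_Icc.inter_right (isClosed_Ici.preimage hcont)
  have hTne : (Icc t v ∩ f ⁻¹' (Ici d)).Nonempty := ⟨t, ⟨le_refl t, htv⟩, hle⟩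
  obtain ⟨⟨htt₁, ht₁v⟩, ht₁d⟩ := hTc.sSup_mem hTne
  set t₁ := sSup (Icc t v ∩ f ⁻¹' (Ici d)) with ht₁def
  have ht₁d' : d ≤ f t₁ := ht₁d
  have ht₁v' : t₁ < v := lt_of_le_of_ne ht₁v (by rintro h; rw [h] at ht₁d'; exact absurd ht₁d' (not_le.2 hv))
  have hgt : ∀ s, t₁ < s → s ≤ v → f s < d := by
    intro s hs hsv
    by_contra h'
    push_neg at h'
    exact absurd (le_csSup hTc.bddAbove ⟨⟨le_trans htt₁ hs.le, hsv⟩, h'⟩) (not_le.2 hs)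
  have hfd : f t₁ = d := by
    refine le_antisymm ?_ ht₁d'
    have htend : Tendsto f (nhdsWithin t₁ (Ioi t₁)) (nhds (f t₁)) :=
      (hcont.tendsto t₁).mono_left nhdsWithin_le_nhds
    refine le_of_tendsto htend ?_
    filter_upwards [Ioc_mem_nhdsGT_of_mem (⟨le_refl t₁, ht₁v'⟩ : t₁ ∈ Ico t₁ v)] with s hs
    exact (hgt s hs.1 hs.2).le
  have hpos := hder t₁ (le_trans hut htt₁) ht₁v hfd
  have hslope : Tendsto (slope f t₁) (nhdsWithin t₁ {t₁}ᶜ) (nhds (f' t₁)) :=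
    hasDerivAt_iff_tendsto_slope.mp (hf t₁)
  have h2 : ∀ᶠ s in nhdsWithin t₁ {t₁}ᶜ, 0 < slope f t₁ s :=
    hslope.eventually (eventually_gt_nhds hpos)
  have h3 : ∀ᶠ s in nhdsWithin t₁ (Ioi t₁), 0 < slope f t₁ s :=
    h2.filter_mono (nhdsWithin_mono t₁ (fun x hx => ne_of_gt hx))
  have h4 : Ioc t₁ v ∈ nhdsWithin t₁ (Ioi t₁) :=
    Ioc_mem_nhdsGT_of_mem ⟨le_refl t₁, ht₁v'⟩
  obtain ⟨s, hs1, hs2⟩ := (h3.and (eventually_of_mem h4 (fun x hx => hx))).exists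
  rw [slope_def_field, hfd] at hs1
  rcases div_pos_iff.mp hs1 with ⟨hn, _⟩ | ⟨_, hdneg⟩
  · exact absurd (hgt s hs2.1 hs2.2) (not_lt.2 (by linarith))
  · have : 0 < s - t₁ := sub_pos.2 hs2.1
    linarith

lemma no_downcross {f f' : ℝ → ℝ} (hf : ∀ s, HasDerivAt f (f' s) s)
    {u v d : ℝ} (hu : d < f u)
    (hder : ∀ t, u ≤ t → t ≤ v → f t = d → 0 < f' t) :
    ∀ t, u ≤ t → t ≤ v → d < f t := by
  intro t hut htv
  have hg : ∀ s, HasDerivAt (fun x => -f (-x)) (f' (-s)) s := by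
    intro s
    have h1 : HasDerivAt (f ∘ (fun x : ℝ => -x)) (f' (-s) * (-1)) s :=
      HasDerivAt.comp s (hf (-s)) (by simpa using hasDerivAt_neg s)
    have := h1.neg
    have e : f' (-s) = -(f' (-s) * -1) := by ring
    rw [e]; exact this
  have key := no_upcross (f := fun x => -f (-x)) (f' := fun s => f' (-s)) hg
    (u := -v) (v := -u) (d := -d) (by simpa using neg_lt_neg hu)
    (by
      intro s h1 h2 h3
      refine hder (-s) (by linarith) (by linarith) ?_
      have h4 : -f (-s) = -d := h3
      linarith)
  have := key (-t) (by linarith) (by linarith)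
  simp only [neg_neg] at this
  linarith

lemma ev_sign {f : ℝ → ℝ} {f' s : ℝ} (hf : HasDerivAt f f' s) (h0 : f s = 0) (hpos : 0 < f') :
    (∀ᶠ t in nhdsWithin s (Ioi s), 0 < f t) ∧ (∀ᶠ t in nhdsWithin s (Iio s), f t < 0) := by
  have hslope : Tendsto (slope f s) (nhdsWithin s {s}ᶜ) (nhds f') :=
    hasDerivAt_iff_tendsto_slope.mp hf
  have h2 : ∀ᶠ t in nhdsWithin s {s}ᶜ, 0 < slope f s t :=
    hslope.eventually (eventually_gt_nhds hpos)
  constructor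
  · have h3 := h2.filter_mono (nhdsWithin_mono s (fun x hx => ne_of_gt hx))
    filter_upwards [h3, self_mem_nhdsWithin] with t ht hts
    rw [slope_def_field, h0, sub_zero] at ht
    rcases div_pos_iff.mp ht with ⟨hn, _⟩ | ⟨_, hd⟩
    · exact hn
    · have : 0 < t - s := sub_pos.2 hts
      linarith
  · have h3 := h2.filter_mono (nhdsWithin_mono s (fun x hx => ne_of_lt hx))
    filter_upwards [h3, self_mem_nhdsWithin] with t ht hts
    rw [slope_def_field, h0, sub_zero] at ht
    rcases div_pos_iff.mp ht with ⟨_, hd⟩ | ⟨hn, _⟩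
    · have : t - s < 0 := sub_neg.2 hts
      linarith
    · exact hn

lemma one_add_kF_mul (h x y : ℝ) (hh : 0 < h) :
    1 + kF h x y * y =
      ((1 + (x ^ 2 + y ^ 2)) * (h ^ 2 + (x ^ 2 + y ^ 2)) +
        (2 * (x ^ 2 + h ^ 2 * (1 + y ^ 2)) * x + (h ^ 2 - 1) * (1 + y ^ 2) * y) * y) /
      ((1 + (x ^ 2 + y ^ 2)) * (h ^ 2 + (x ^ 2 + y ^ 2))) := by
  have hD : ((1 + (x ^ 2 + y ^ 2)) * (h ^ 2 + (x ^ 2 + y ^ 2))) ≠ 0 := by positivity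
  unfold kF
  field_simp

lemma pos_at_zero (h y : ℝ) (hh : 0 < h) : 0 < 1 + kF h 0 y * y := by
  rw [one_add_kF_mul h 0 y hh]
  apply div_pos
  · have e : (1 + ((0:ℝ) ^ 2 + y ^ 2)) * (h ^ 2 + ((0:ℝ) ^ 2 + y ^ 2)) +
        (2 * ((0:ℝ) ^ 2 + h ^ 2 * (1 + y ^ 2)) * 0 + (h ^ 2 - 1) * (1 + y ^ 2) * y) * y
        = h ^ 2 * (1 + y ^ 2) ^ 2 := by ring
    rw [e]; positivity
  · positivity

lemma keybound (h M : ℝ) (hh : 0 < h) (hM : 0 ≤ M) :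
    ∃ δ c : ℝ, 0 < δ ∧ 0 < c ∧
      ∀ x y : ℝ, y ^ 2 ≤ M → |x| ≤ δ → c ≤ 1 + kF h x y * y := by
  refine ⟨min 1 (h ^ 2 / (4 * (1 + M) * (1 + h ^ 2 * (1 + M)))),
    h ^ 2 / (2 * ((2 + M) * (h ^ 2 + 1 + M))), lt_min one_pos (by positivity), by positivity, ?_⟩
  set δ := min 1 (h ^ 2 / (4 * (1 + M) * (1 + h ^ 2 * (1 + M)))) with hδdef
  set c := h ^ 2 / (2 * ((2 + M) * (h ^ 2 + 1 + M))) with hcdef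
  have hδ1 : δ ≤ 1 := min_le_left _ _
  have hδ2 : δ ≤ h ^ 2 / (4 * (1 + M) * (1 + h ^ 2 * (1 + M))) := min_le_right _ _
  have hδ0 : 0 < δ := lt_min one_pos (by positivity)
  intro x y hy2 hx
  have hD : 0 < (1 + (x ^ 2 + y ^ 2)) * (h ^ 2 + (x ^ 2 + y ^ 2)) := by positivity
  rw [one_add_kF_mul h x y hh, le_div_iff₀ hD]
  have hax : x ^ 2 ≤ 1 := by nlinarith [sq_abs x, abs_nonneg x]
  have hay : |y| ≤ 1 + M := by nlinarith [sq_abs y, sq_nonneg (|y| - 1), abs_nonneg y]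
  have hA1 : (1:ℝ) ≤ 1 + y ^ 2 := by nlinarith [sq_nonneg y]
  have h1 : x ^ 2 + h ^ 2 * (1 + y ^ 2) ≤ 1 + h ^ 2 * (1 + M) := by nlinarith [sq_nonneg h]
  have h2 : (0:ℝ) ≤ x ^ 2 + h ^ 2 * (1 + y ^ 2) := by positivity
  have key : |x| * |y| * (x ^ 2 + h ^ 2 * (1 + y ^ 2)) ≤ δ * (1 + M) * (1 + h ^ 2 * (1 + M)) :=
    mul_le_mul (mul_le_mul hx hay (abs_nonneg y) hδ0.le) h1 h2 (by positivity)
  have key2 : δ * (1 + M) * (1 + h ^ 2 * (1 + M)) ≤ h ^ 2 / 4 := by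
    have hpos : (0:ℝ) < (1 + M) * (1 + h ^ 2 * (1 + M)) := by positivity
    have := mul_le_mul_of_nonneg_right hδ2 hpos.le
    have e : h ^ 2 / (4 * (1 + M) * (1 + h ^ 2 * (1 + M))) * ((1 + M) * (1 + h ^ 2 * (1 + M)))
        = h ^ 2 / 4 := by field_simp
    nlinarith [this, e]
  have hxy3 : -(h ^ 2 / 4) ≤ x * y * (x ^ 2 + h ^ 2 * (1 + y ^ 2)) := by
    have habs : |x * y * (x ^ 2 + h ^ 2 * (1 + y ^ 2))| =
        |x| * |y| * (x ^ 2 + h ^ 2 * (1 + y ^ 2)) := by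
      rw [abs_mul, abs_mul, abs_of_nonneg h2]
    have := neg_abs_le (x * y * (x ^ 2 + h ^ 2 * (1 + y ^ 2)))
    rw [habs] at this
    linarith
  have hN : h ^ 2 / 2 ≤ (1 + (x ^ 2 + y ^ 2)) * (h ^ 2 + (x ^ 2 + y ^ 2)) +
      (2 * (x ^ 2 + h ^ 2 * (1 + y ^ 2)) * x + (h ^ 2 - 1) * (1 + y ^ 2) * y) * y := by
    have hid : (1 + (x ^ 2 + y ^ 2)) * (h ^ 2 + (x ^ 2 + y ^ 2)) +
        (2 * (x ^ 2 + h ^ 2 * (1 + y ^ 2)) * x + (h ^ 2 - 1) * (1 + y ^ 2) * y) * y =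
        h ^ 2 * (1 + y ^ 2) ^ 2 + ((1 + y ^ 2) + (h ^ 2 + y ^ 2)) * x ^ 2 + x ^ 4
          + 2 * (x * y * (x ^ 2 + h ^ 2 * (1 + y ^ 2))) := by ring
    rw [hid]
    have hsq : (1:ℝ) ≤ (1 + y ^ 2) ^ 2 := by nlinarith [sq_nonneg y]
    have hterm : h ^ 2 * 1 ≤ h ^ 2 * (1 + y ^ 2) ^ 2 := mul_le_mul_of_nonneg_left hsq (sq_nonneg h)
    have hmid : (0:ℝ) ≤ ((1 + y ^ 2) + (h ^ 2 + y ^ 2)) * x ^ 2 := by positivity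
    have hx4 : (0:ℝ) ≤ x ^ 4 := by positivity
    linarith
  have hDle : (1 + (x ^ 2 + y ^ 2)) * (h ^ 2 + (x ^ 2 + y ^ 2)) ≤ (2 + M) * (h ^ 2 + 1 + M) := by
    have e1 : 1 + (x ^ 2 + y ^ 2) ≤ 2 + M := by linarith
    have e2 : h ^ 2 + (x ^ 2 + y ^ 2) ≤ h ^ 2 + 1 + M := by linarith
    exact mul_le_mul e1 e2 (by positivity) (by linarith)
  have hc0 : (0:ℝ) ≤ c := by positivity
  have hcD0 : c * ((2 + M) * (h ^ 2 + 1 + M)) = h ^ 2 / 2 := by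
    rw [hcdef]; field_simp
  have := mul_le_mul_of_nonneg_left hDle hc0
  linarith [this, hcD0, hN]

lemma core_pos (h : ℝ) (hh : 0 < h) (τ μ : ℝ → ℝ)
    (hτd : ∀ s, HasDerivAt τ (1 + kF h (τ s) (μ s) * μ s) s)
    (M δ c : ℝ) (hδ : 0 < δ) (hc : 0 < c)
    (hkey : ∀ x y : ℝ, y ^ 2 ≤ M → |x| ≤ δ → c ≤ 1 + kF h x y * y)
    (s₁ : ℝ) (hs₁ : τ s₁ < δ)
    (hpos : ∀ t, s₁ - (δ / c + 1) ≤ t → t ≤ s₁ → 0 < τ t)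
    (hbd : ∀ t, s₁ - (δ / c + 1) ≤ t → t ≤ s₁ → μ t ^ 2 ≤ M) : False := by
  have hL0 : 0 < δ / c + 1 := by positivity
  have hder : ∀ t, s₁ - (δ / c + 1) ≤ t → t ≤ s₁ → τ t = δ →
      0 < 1 + kF h (τ t) (μ t) * μ t := by
    intro t h1 h2 h3
    refine lt_of_lt_of_le hc (hkey (τ t) (μ t) (hbd t h1 h2) ?_)
    rw [h3, abs_of_pos hδ]
  have hlt := no_upcross hτd hs₁ hder
  have hcge : ∀ t, s₁ - (δ / c + 1) ≤ t → t ≤ s₁ → c ≤ 1 + kF h (τ t) (μ t) * μ t := by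
    intro t h1 h2
    refine hkey (τ t) (μ t) (hbd t h1 h2) ?_
    rw [abs_le]
    exact ⟨by linarith [hpos t h1 h2], (hlt t h1 h2).le⟩
  have hg := growth hτd (by linarith : s₁ - (δ / c + 1) ≤ s₁) hcge
  have he : c * (s₁ - (s₁ - (δ / c + 1))) = δ + c := by field_simp; try ring
  have := hpos (s₁ - (δ / c + 1)) (le_refl _) (by linarith)
  linarith

lemma core_neg (h : ℝ) (hh : 0 < h) (τ μ : ℝ → ℝ)
    (hτd : ∀ s, HasDerivAt τ (1 + kF h (τ s) (μ s) * μ s) s)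
    (M δ c : ℝ) (hδ : 0 < δ) (hc : 0 < c)
    (hkey : ∀ x y : ℝ, y ^ 2 ≤ M → |x| ≤ δ → c ≤ 1 + kF h x y * y)
    (s₁ : ℝ) (hs₁ : -δ < τ s₁)
    (hneg : ∀ t, s₁ ≤ t → t ≤ s₁ + (δ / c + 1) → τ t < 0)
    (hbd : ∀ t, s₁ ≤ t → t ≤ s₁ + (δ / c + 1) → μ t ^ 2 ≤ M) : False := by
  have hL0 : 0 < δ / c + 1 := by positivity
  have hder : ∀ t, s₁ ≤ t → t ≤ s₁ + (δ / c + 1) → τ t = -δ →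
      0 < 1 + kF h (τ t) (μ t) * μ t := by
    intro t h1 h2 h3
    refine lt_of_lt_of_le hc (hkey (τ t) (μ t) (hbd t h1 h2) ?_)
    rw [h3, abs_neg, abs_of_pos hδ]
  have hgt := no_downcross hτd hs₁ hder
  have hcge : ∀ t, s₁ ≤ t → t ≤ s₁ + (δ / c + 1) → c ≤ 1 + kF h (τ t) (μ t) * μ t := by
    intro t h1 h2
    refine hkey (τ t) (μ t) (hbd t h1 h2) ?_
    rw [abs_le]
    exact ⟨(hgt t h1 h2).le, by linarith [hneg t h1 h2]⟩
  have hg := growth hτd (by linarith : s₁ ≤ s₁ + (δ / c + 1)) hcge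
  have he : c * (s₁ + (δ / c + 1) - s₁) = δ + c := by field_simp; try ring
  have := hneg (s₁ + (δ / c + 1)) (by linarith) (le_refl _)
  linarith

lemma find_pos {τ g : ℝ → ℝ} (hg : ∀ s, HasDerivAt g (2 * τ s) s) (hg0 : ∀ s, 0 ≤ g s)
    (M δ b : ℝ) (hδ : 0 < δ) (hM : 0 ≤ M) (hbM : g (b + (M / (2 * δ) + 1)) ≤ M) :
    ∃ s, b ≤ s ∧ s ≤ b + (M / (2 * δ) + 1) ∧ τ s < δ := by
  by_contra hcon
  push_neg at hcon
  have hbT : b ≤ b + (M / (2 * δ) + 1) := by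
    have := div_nonneg hM (by positivity : (0:ℝ) ≤ 2 * δ)
    linarith
  have hge : ∀ t, b ≤ t → t ≤ b + (M / (2 * δ) + 1) → 2 * δ ≤ 2 * τ t := fun t h1 h2 => by
    linarith [hcon t h1 h2]
  have := growth hg hbT hge
  have e : 2 * δ * (b + (M / (2 * δ) + 1) - b) = M + 2 * δ := by field_simp; ring
  linarith [hg0 b]

lemma find_neg {τ g : ℝ → ℝ} (hg : ∀ s, HasDerivAt g (2 * τ s) s) (hg0 : ∀ s, 0 ≤ g s)
    (M δ b : ℝ) (hδ : 0 < δ) (hM : 0 ≤ M) (hbM : g b ≤ M) :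
    ∃ s, b ≤ s ∧ s ≤ b + (M / (2 * δ) + 1) ∧ -δ < τ s := by
  by_contra hcon
  push_neg at hcon
  have hbT : b ≤ b + (M / (2 * δ) + 1) := by
    have := div_nonneg hM (by positivity : (0:ℝ) ≤ 2 * δ)
    linarith
  have hge : ∀ t, b ≤ t → t ≤ b + (M / (2 * δ) + 1) → 2 * τ t ≤ -(2 * δ) := fun t h1 h2 => by
    linarith [hcon t h1 h2]
  have := growth' hg hbT hge
  have e : -(2 * δ) * (b + (M / (2 * δ) + 1) - b) = -(M + 2 * δ) := by field_simp; ring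
  linarith [hg0 (b + (M / (2 * δ) + 1))]

/-- along any global solution, `r² = τ² + μ²` has exactly one critical
point, which is a global minimum, and `r²(s) → +∞` as `s → ±∞`. -/
theorem r_squared_behaviour (h : ℝ) (hh : 0 < h) (τ μ : ℝ → ℝ)
    (hsol : IsSol h τ μ) :
    (∃ s₀ : ℝ,
      deriv (fun s => τ s ^ 2 + μ s ^ 2) s₀ = 0 ∧
      (∀ s : ℝ, s ≠ s₀ → deriv (fun s => τ s ^ 2 + μ s ^ 2) s ≠ 0) ∧
      (∀ s : ℝ, τ s₀ ^ 2 + μ s₀ ^ 2 ≤ τ s ^ 2 + μ s ^ 2)) ∧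
    Tendsto (fun s => τ s ^ 2 + μ s ^ 2) atTop atTop ∧
    Tendsto (fun s => τ s ^ 2 + μ s ^ 2) atBot atTop := by
  have hτd : ∀ s, HasDerivAt τ (1 + kF h (τ s) (μ s) * μ s) s := fun s => (hsol s).1
  have hμd : ∀ s, HasDerivAt μ (-(kF h (τ s) (μ s) * τ s)) s := fun s => (hsol s).2
  set r2 : ℝ → ℝ := fun s => τ s ^ 2 + μ s ^ 2 with hr2def
  have hr2d : ∀ s, HasDerivAt r2 (2 * τ s) s := by
    intro s
    have h1 := (hτd s).pow 2
    have h2 := (hμd s).pow 2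
    have h3 : HasDerivAt r2 _ s := h1.add h2
    convert h3 using 1
    push_cast
    ring
  have hcont : Continuous τ := Differentiable.continuous (fun t => (hτd t).differentiableAt)
  have hτ0pos : ∀ s, τ s = 0 → 0 < 1 + kF h (τ s) (μ s) * μ s := by
    intro s h0; rw [h0]; exact pos_at_zero h (μ s) hh
  have hr20 : ∀ s, 0 ≤ r2 s := fun s => by positivity
  have hμbd : ∀ s, μ s ^ 2 ≤ r2 s := fun s => by
    simp only [hr2def]; nlinarith [sq_nonneg (τ s)]
  -- existence of a zero of τ
  have hex : ∃ s₀, τ s₀ = 0 := by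
    by_contra hne
    push_neg at hne
    rcases lt_or_gt_of_ne (hne 0) with hneg0 | hpos0
    · -- τ < 0 everywhere
      have hneg : ∀ s, τ s < 0 := by
        intro s
        rcases lt_trichotomy (τ s) 0 with h1 | h1 | h1
        · exact h1
        · exact absurd h1 (hne s)
        · exfalso
          rcases le_total s 0 with hs | hs
          · obtain ⟨t, _, ht⟩ := intermediate_value_Icc' hs hcont.continuousOn
              (⟨hneg0.le, h1.le⟩ : (0:ℝ) ∈ Icc (τ 0) (τ s))
            exact hne t ht
          · obtain ⟨t, _, ht⟩ := intermediate_value_Icc hs hcont.continuousOn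
              (⟨hneg0.le, h1.le⟩ : (0:ℝ) ∈ Icc (τ 0) (τ s))
            exact hne t ht
      have hM : 0 ≤ r2 0 := hr20 0
      obtain ⟨δ, c, hδ, hc, hkey⟩ := keybound h (r2 0) hh hM
      have hr2le : ∀ s, 0 ≤ s → r2 s ≤ r2 0 := by
        intro s hs
        have := growth' hr2d hs (C := 0) (fun t h1 h2 => by linarith [hneg t])
        simpa using this
      obtain ⟨s₁, hb1, hb2, hs₁⟩ := find_neg hr2d hr20 (r2 0) δ 0 hδ hM (le_refl _)
      exact core_neg h hh τ μ hτd (r2 0) δ c hδ hc hkey s₁ hs₁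
        (fun t h1 h2 => hneg t)
        (fun t h1 h2 => le_trans (hμbd t) (hr2le t (by linarith)))
    · -- τ > 0 everywhere
      have hpos : ∀ s, 0 < τ s := by
        intro s
        rcases lt_trichotomy (τ s) 0 with h1 | h1 | h1
        · exfalso
          rcases le_total s 0 with hs | hs
          · obtain ⟨t, _, ht⟩ := intermediate_value_Icc hs hcont.continuousOn
              (⟨h1.le, hpos0.le⟩ : (0:ℝ) ∈ Icc (τ s) (τ 0))
            exact hne t ht
          · obtain ⟨t, _, ht⟩ := intermediate_value_Icc' hs hcont.continuousOn
              (⟨h1.le, hpos0.le⟩ : (0:ℝ) ∈ Icc (τ s) (τ 0))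
            exact hne t ht
        · exact absurd h1 (hne s)
        · exact h1
      have hM : 0 ≤ r2 0 := hr20 0
      obtain ⟨δ, c, hδ, hc, hkey⟩ := keybound h (r2 0) hh hM
      have hr2le : ∀ s, s ≤ 0 → r2 s ≤ r2 0 := by
        intro s hs
        have := growth hr2d hs (c := 0) (fun t h1 h2 => by linarith [hpos t])
        simpa using this
      obtain ⟨s₁, hb1, hb2, hs₁⟩ := find_pos hr2d hr20 (r2 0) δ (-(r2 0 / (2 * δ) + 1)) hδ hM
        (by rw [show -(r2 0 / (2 * δ) + 1) + (r2 0 / (2 * δ) + 1) = (0:ℝ) from by ring])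
      have hs₁0 : s₁ ≤ 0 := by linarith
      exact core_pos h hh τ μ hτd (r2 0) δ c hδ hc hkey s₁ hs₁
        (fun t h1 h2 => hpos t)
        (fun t h1 h2 => le_trans (hμbd t) (hr2le t (by linarith)))
  obtain ⟨s₀, h0⟩ := hex
  have hd0 : 0 < 1 + kF h (τ s₀) (μ s₀) * μ s₀ := hτ0pos s₀ h0
  have hev := ev_sign (hτd s₀) h0 hd0
  -- uniqueness of the zero
  have huniq : ∀ a b : ℝ, a < b → τ a = 0 → τ b = 0 → False := by
    intro a b hab ha hb
    obtain ⟨hevra, _⟩ := ev_sign (hτd a) ha (hτ0pos a ha)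
    obtain ⟨_, hevlb⟩ := ev_sign (hτd b) hb (hτ0pos b hb)
    obtain ⟨s', hs'1, hs'2⟩ := (hevra.and (eventually_of_mem
      (Ioo_mem_nhdsGT_of_mem (⟨le_refl a, hab⟩ : a ∈ Ico a b)) (fun x hx => hx))).exists
    obtain ⟨s'', hs''1, hs''2⟩ := (hevlb.and (eventually_of_mem
      (Ioo_mem_nhdsLT_of_mem (⟨hs'2.2, le_refl b⟩ : b ∈ Ioc s' b)) (fun x hx => hx))).exists
    have := no_downcross hτd (u := s') (v := s'') (d := 0) hs'1
      (fun t _ _ h3 => hτ0pos t h3) s'' hs''2.1.le (le_refl _)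
    linarith
  have hzeros : ∀ s, s ≠ s₀ → τ s ≠ 0 := by
    intro s hs h'
    rcases lt_or_gt_of_ne hs with h1 | h1
    · exact huniq s s₀ h1 h' h0
    · exact huniq s₀ s h1 h0 h'
  -- signs
  have hsign_pos : ∀ s, s₀ < s → 0 < τ s := by
    intro s hs
    rcases lt_trichotomy (τ s) 0 with hlt | heq | hgt
    · exfalso
      obtain ⟨t, ht1, ht2⟩ := (hev.1.and (eventually_of_mem
        (Ioo_mem_nhdsGT_of_mem (⟨le_refl s₀, hs⟩ : s₀ ∈ Ico s₀ s)) (fun x hx => hx))).exists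
      obtain ⟨z, hz1, hz2⟩ := intermediate_value_Icc' ht2.2.le hcont.continuousOn
        (⟨hlt.le, ht1.le⟩ : (0:ℝ) ∈ Icc (τ s) (τ t))
      exact hzeros z (ne_of_gt (lt_of_lt_of_le ht2.1 hz1.1)) hz2
    · exact absurd heq (hzeros s (ne_of_gt hs))
    · exact hgt
  have hsign_neg : ∀ s, s < s₀ → τ s < 0 := by
    intro s hs
    rcases lt_trichotomy (τ s) 0 with hlt | heq | hgt
    · exact hlt
    · exact absurd heq (hzeros s (ne_of_lt hs))
    · exfalso
      obtain ⟨t, ht1, ht2⟩ := (hev.2.and (eventually_of_mem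
        (Ioo_mem_nhdsLT_of_mem (⟨hs, le_refl s₀⟩ : s₀ ∈ Ioc s s₀)) (fun x hx => hx))).exists
      obtain ⟨z, hz1, hz2⟩ := intermediate_value_Icc' ht2.1.le hcont.continuousOn
        (⟨ht1.le, hgt.le⟩ : (0:ℝ) ∈ Icc (τ t) (τ s))
      exact hzeros z (ne_of_lt (lt_of_le_of_lt hz1.2 ht2.2)) hz2
  -- monotonicity helpers
  have hmono_fwd : ∀ u v, s₀ ≤ u → u ≤ v → r2 u ≤ r2 v := by
    intro u v hu huv
    have := growth hr2d huv (c := 0) (fun t ht1 ht2 => by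
      rcases eq_or_lt_of_le (le_trans hu ht1) with hq | hq
      · rw [← hq, h0]; norm_num
      · linarith [hsign_pos t hq])
    simpa using this
  have hmono_bwd : ∀ u v, u ≤ v → v ≤ s₀ → r2 v ≤ r2 u := by
    intro u v huv hv
    have := growth' hr2d huv (C := 0) (fun t ht1 ht2 => by
      rcases eq_or_lt_of_le (le_trans ht2 hv) with hq | hq
      · rw [hq, h0]; norm_num
      · linarith [hsign_neg t hq])
    simpa using this
  have hmin : ∀ s : ℝ, r2 s₀ ≤ r2 s := by
    intro s
    rcases le_total s₀ s with hs | hs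
    · exact hmono_fwd s₀ s (le_refl _) hs
    · exact hmono_bwd s s₀ hs (le_refl _)
  -- tendsto atTop
  have httop : Tendsto r2 atTop atTop := by
    rw [tendsto_atTop]
    intro b
    have hT : ∃ T, s₀ ≤ T ∧ b ≤ r2 T := by
      by_contra hcon
      push_neg at hcon
      have hM : 0 ≤ max b 0 := le_max_right _ _
      have hr2M : ∀ s, s₀ ≤ s → r2 s ≤ max b 0 :=
        fun s hs => le_trans (hcon s hs).le (le_max_left _ _)
      obtain ⟨δ, c, hδ, hc, hkey⟩ := keybound h (max b 0) hh hM
      have hq0 : 0 ≤ max b 0 / (2 * δ) := div_nonneg hM (by positivity)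
      have hL0 : 0 < δ / c + 1 := by positivity
      obtain ⟨s₁, hb1, hb2, hs₁⟩ := find_pos hr2d hr20 (max b 0) δ (s₀ + 1 + (δ / c + 1)) hδ hM
        (hr2M _ (by linarith))
      exact core_pos h hh τ μ hτd (max b 0) δ c hδ hc hkey s₁ hs₁
        (fun t h1 h2 => hsign_pos t (by linarith))
        (fun t h1 h2 => le_trans (hμbd t) (hr2M t (by linarith)))
    obtain ⟨T, hT1, hT2⟩ := hT
    filter_upwards [eventually_ge_atTop T] with s hs
    exact le_trans hT2 (hmono_fwd T s hT1 hs)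
  -- tendsto atBot
  have htbot : Tendsto r2 atBot atTop := by
    rw [tendsto_atTop]
    intro b
    have hT : ∃ T, T ≤ s₀ ∧ b ≤ r2 T := by
      by_contra hcon
      push_neg at hcon
      have hM : 0 ≤ max b 0 := le_max_right _ _
      have hr2M : ∀ s, s ≤ s₀ → r2 s ≤ max b 0 :=
        fun s hs => le_trans (hcon s hs).le (le_max_left _ _)
      obtain ⟨δ, c, hδ, hc, hkey⟩ := keybound h (max b 0) hh hM
      have hL0 : 0 < δ / c + 1 := by positivity
      have hq0 : 0 ≤ max b 0 / (2 * δ) := div_nonneg hM (by positivity)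
      obtain ⟨s₁, hb1, hb2, hs₁⟩ := find_neg hr2d hr20 (max b 0) δ
        (s₀ - 1 - (δ / c + 1) - (max b 0 / (2 * δ) + 1)) hδ hM
        (hr2M _ (by linarith))
      exact core_neg h hh τ μ hτd (max b 0) δ c hδ hc hkey s₁ hs₁
        (fun t h1 h2 => hsign_neg t (by linarith))
        (fun t h1 h2 => le_trans (hμbd t) (hr2M t (by linarith)))
    obtain ⟨T, hT1, hT2⟩ := hT
    filter_upwards [eventually_le_atBot T] with s hs
    exact le_trans hT2 (hmono_bwd s T hs hT1)
  refine ⟨⟨s₀, ?_, ?_, ?_⟩, httop, htbot⟩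
  · rw [(hr2d s₀).deriv, h0]; ring
  · intro s hs
    rw [(hr2d s).deriv]
    rcases lt_or_gt_of_ne hs with h1 | h1
    · have := hsign_neg s h1; intro hq; nlinarith
    · have := hsign_pos s h1; intro hq; nlinarith
  · exact hmin
end

section
/- For h > 0 and any global solution (τ, μ) of the rotator ODE system τ' = 1 + kμ, μ' = −kτ with k(τ,μ) = (2(τ² + h²(1+μ²))τ + (h²−1)(1+μ²)μ)/((1+r²)(h²+r²)), the limits lim_{s→±∞} τ(s) and lim_{s→±∞} μ(s) exist in [−∞, +∞], and in fact lim_{s→±∞} τ(s) = ±∞ while lim_{s→±∞} μ(s) = ∓∞. -/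
set_option maxHeartbeats 1000000

open Filter
open Set

lemma growth_aux (f f' : ℝ → ℝ) (a c : ℝ)
    (hf : ∀ s, a ≤ s → HasDerivAt f (f' s) s)
    (H : ∀ s, a ≤ s → c ≤ f' s) :
    ∀ s, a ≤ s → f a + c * (s - a) ≤ f s := by
  intro s hs
  have hmono : MonotoneOn (fun t => f t - c * t) (Ici a) := by
    apply monotoneOn_of_deriv_nonneg (convex_Ici a)
    · intro t ht
      exact ((hf t ht).sub ((hasDerivAt_id t).const_mul c)).continuousAt.continuousWithinAt
    · intro t ht
      rw [interior_Ici] at ht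
      exact ((hf t ht.le).sub ((hasDerivAt_id t).const_mul c)).differentiableAt.differentiableWithinAt
    · intro t ht
      rw [interior_Ici] at ht
      have hd : HasDerivAt (fun t => f t - c * t) (f' t - c) t := by
        exact (hf t ht.le).sub (((hasDerivAt_id' t).const_mul c).congr_deriv (mul_one c))
      rw [hd.deriv]
      linarith [H t ht.le]
  have := hmono (self_mem_Ici) (mem_Ici.2 hs) hs
  simp only at this
  linarith

lemma decay_aux (f f' : ℝ → ℝ) (a : ℝ)
    (hf : ∀ s, a ≤ s → HasDerivAt f (f' s) s)
    (H : ∀ s, a ≤ s → f' s ≤ 0) :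
    ∀ s, a ≤ s → f s ≤ f a := by
  intro s hs
  have := growth_aux (fun t => -f t) (fun t => -f' t) a 0
    (fun t ht => (hf t ht).neg) (fun t ht => neg_nonneg.2 (H t ht)) s hs
  linarith

lemma stay_above (f f' : ℝ → ℝ) (a b : ℝ)
    (hf : ∀ s, a ≤ s → HasDerivAt f (f' s) s)
    (h0 : b < f a)
    (H : ∀ s, a ≤ s → f s = b → 0 < f' s) :
    ∀ s, a ≤ s → b < f s := by
  by_contra hcon
  push_neg at hcon
  obtain ⟨s0, hs0a, hs0⟩ := hcon
  have hne : {s | a ≤ s ∧ f s ≤ b}.Nonempty := ⟨s0, hs0a, hs0⟩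
  have hbdd : BddBelow {s | a ≤ s ∧ f s ≤ b} := ⟨a, fun x hx => hx.1⟩
  have hclosed : IsClosed {s | a ≤ s ∧ f s ≤ b} := by
    have he : {s | a ≤ s ∧ f s ≤ b} = Ici a ∩ f ⁻¹' (Iic b) := by
      ext x
      simp only [mem_setOf_eq, mem_inter_iff, mem_Ici, mem_preimage, mem_Iic]
    rw [he]
    apply ContinuousOn.preimage_isClosed_of_isClosed _ isClosed_Ici isClosed_Iic
    exact fun t ht => (hf t ht).continuousAt.continuousWithinAt
  obtain ⟨z, hzdef⟩ : ∃ z, z = sInf {s | a ≤ s ∧ f s ≤ b} := ⟨_, rfl⟩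
  have hzS : z ∈ {s | a ≤ s ∧ f s ≤ b} := hzdef ▸ hclosed.csInf_mem hne hbdd
  have haz : a ≤ z := hzS.1
  have hfz : f z ≤ b := hzS.2
  have haltz : a < z := lt_of_le_of_ne haz (by rintro rfl; linarith)
  have hmid : ∀ t, t ∈ Ioo a z → b < f t := by
    intro t ht
    by_contra hb
    push_neg at hb
    have hmem : t ∈ {s | a ≤ s ∧ f s ≤ b} := ⟨ht.1.le, hb⟩
    have := csInf_le hbdd hmem
    rw [← hzdef] at this
    linarith [ht.2]
  have hfzb : f z = b := by
    refine le_antisymm hfz ?_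
    have hcont : Tendsto f (nhdsWithin z (Iio z)) (nhds (f z)) :=
      ((hf z haz).continuousAt.tendsto).mono_left nhdsWithin_le_nhds
    have hev : ∀ᶠ t in nhdsWithin z (Iio z), b ≤ f t := by
      filter_upwards [Ioo_mem_nhdsLT haltz] with t ht
      exact (hmid t ht).le
    exact ge_of_tendsto hcont hev
  have hder : 0 < f' z := H z haz hfzb
  have hslope : Tendsto (slope f z) (nhdsWithin z (Iio z)) (nhds (f' z)) :=
    ((hasDerivAt_iff_tendsto_slope.1 (hf z haz)).mono_left
      (nhdsWithin_mono z (fun x hx => ne_of_lt hx)))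
  have hev : ∀ᶠ t in nhdsWithin z (Iio z), slope f z t ≤ 0 := by
    filter_upwards [Ioo_mem_nhdsLT haltz] with t ht
    have h1 : 0 < f t - f z := by rw [hfzb]; linarith [hmid t ht]
    have h2 : t - z < 0 := by linarith [ht.2]
    rw [slope_def_field]
    exact le_of_lt (div_neg_of_pos_of_neg h1 h2)
  have := le_of_tendsto hslope hev
  linarith

noncomputable def Dq (h a b : ℝ) : ℝ := (1 + (a^2+b^2))*(h^2+(a^2+b^2))
noncomputable def Nq (h a b : ℝ) : ℝ :=
  2 * (a ^ 2 + h ^ 2 * (1 + b ^ 2)) * a + (h ^ 2 - 1) * (1 + b ^ 2) * b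
noncomputable def Zq (h a b : ℝ) : ℝ := b * Dq h a b + Nq h a b * (a^2+b^2)

lemma kF_eq (h a b : ℝ) : kF h a b = Nq h a b / Dq h a b := rfl

lemma Dq_pos {h : ℝ} (hh : 0 < h) (a b : ℝ) : 0 < Dq h a b := by
  unfold Dq; positivity

lemma Zq_eq (h a b : ℝ) : Zq h a b =
    ((b + 2*a) * (a^2 + h^2*b^2)) * (a^2+b^2)
      + h^2 * (b * (1 + 2*(a^2+b^2)) + 2*a*(a^2+b^2)) := by
  unfold Zq Dq Nq; ring

/-- A1 : on the axis `τ = 0` the vector field pushes `τ` up. -/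
lemma tau_axis_pos {h : ℝ} (hh : 0 < h) (b : ℝ) : 0 < 1 + kF h 0 b * b := by
  have hD := Dq_pos hh 0 b
  have he : 1 + kF h 0 b * b = h^2*(1+b^2)^2 / Dq h 0 b := by
    rw [kF_eq]
    field_simp
    unfold Nq Dq; ring
  rw [he]; positivity

/-- A3 : CLAIM1. -/
lemma claim1 {h a b : ℝ} (hh : 0 < h) (ha : 0 < a) (hab : 0 ≤ b + a)
    (hU : 9*(1+h^2) ≤ a^2+b^2) :
    h^2 * a * (a^2+b^2)^2 ≤ 2*(1+h^2) * Zq h a b := by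
  set U : ℝ := a^2+b^2 with hUdef
  have hU0 : (0:ℝ) < U := by positivity
  have hU1 : (1:ℝ) ≤ U := by nlinarith [sq_nonneg h]
  have e1 : a ≤ b + 2*a := by linarith
  have e2 : h^2*U ≤ (1+h^2)*(a^2+h^2*b^2) := by nlinarith [sq_nonneg a, sq_nonneg (h^2*b)]
  have e3 : a*(h^2*U) ≤ (b+2*a)*((1+h^2)*(a^2+h^2*b^2)) :=
    mul_le_mul e1 e2 (by positivity) (by linarith)
  have e4 : a*(h^2*U)*U ≤ ((b+2*a)*((1+h^2)*(a^2+h^2*b^2)))*U :=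
    mul_le_mul_of_nonneg_right e3 hU0.le
  have e5 : -(h^2*a*U) ≤ h^2*(b*(1+2*U) + 2*a*U) := by
    nlinarith [mul_nonneg hab (by linarith : (0:ℝ) ≤ 1+2*U),
      mul_nonneg ha.le (by linarith : (0:ℝ) ≤ U - 1), sq_nonneg h, pow_pos hh 2]
  have e6 : 2*(1+h^2)*(h^2*a*U) ≤ h^2*a*U*U := by
    have : 2*(1+h^2) ≤ U := by linarith [sq_nonneg h]
    nlinarith [mul_pos (mul_pos (pow_pos hh 2) ha) hU0]
  have hZ := Zq_eq h a b
  rw [← hUdef] at hZ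
  nlinarith [e4, e5, e6, hZ]

/-- A4 : CLAIM2. -/
lemma claim2 {h a b : ℝ} (hh : 0 < h) (ha : 0 < a) (hb : b ≤ -3*a)
    (hU : 9*(1+h^2) ≤ a^2+b^2) :
    6 * Zq h a b ≤ h^2 * b^3 * (a^2+b^2) := by
  set U : ℝ := a^2+b^2 with hUdef
  have hU0 : (0:ℝ) < U := by positivity
  have hb0 : b < 0 := by nlinarith
  have hb2 : 4 ≤ b^2 := by nlinarith [sq_nonneg h, sq_nonneg a]
  have t1 : (b+2*a)*(a^2+h^2*b^2) ≤ (b/3)*(h^2*b^2) := by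
    have e1 : b + 2*a ≤ b/3 := by linarith
    have e2 : h^2*b^2 ≤ a^2+h^2*b^2 := by nlinarith [sq_nonneg a]
    nlinarith [mul_pos (pow_pos hh 2) (by positivity : (0:ℝ) < b^2)]
  have t1' : ((b+2*a)*(a^2+h^2*b^2))*U ≤ ((b/3)*(h^2*b^2))*U :=
    mul_le_mul_of_nonneg_right t1 hU0.le
  have t2 : h^2*b*(1+2*U) ≤ 0 := by
    have h1 : (0:ℝ) < 1+2*U := by linarith
    have h2 := mul_pos (pow_pos hh 2) h1
    nlinarith [mul_neg_of_neg_of_pos hb0 h2]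
  have t3 : h^2*(2*a*U) ≤ -(2/3)*h^2*b*U := by
    nlinarith [mul_nonneg (by linarith : (0:ℝ) ≤ -(3*a+b)) (mul_pos (pow_pos hh 2) hU0).le]
  have t4 : 2*(h^2*b^3*U) - 4*(h^2*b*U) ≤ h^2*b^3*U := by
    nlinarith [mul_nonneg (mul_nonneg (mul_pos (pow_pos hh 2) hU0).le
      (by linarith : (0:ℝ) ≤ -b)) (by linarith : (0:ℝ) ≤ b^2 - 4)]
  have hZ := Zq_eq h a b
  rw [← hUdef] at hZ
  nlinarith [t1', t2, t3, t4, hZ]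

/-- A5 : the `X = μ + τ` barrier. -/
lemma X_barrier {h a b : ℝ} (hh : 0 < h) (hb : b = -a) (hU : 9*(1+h^2) ≤ a^2+b^2) :
    Dq h a b + Nq h a b * (b - a) < 0 := by
  subst hb
  have ha2 : 9*(1+h^2) ≤ 2*a^2 := by nlinarith
  have : Dq h a (-a) + Nq h a (-a) * (-a - a) = h^2 - 2*(1+h^2)*a^4 := by
    unfold Dq Nq; ring
  rw [this]
  nlinarith [sq_nonneg h, sq_nonneg a, sq_nonneg (h*h), sq_nonneg (a*h)]

/-- A6 : the `Y = μ + 3τ` barrier. -/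
lemma Y_barrier {h a b : ℝ} (hh : 0 < h) (hb : b = -3*a) :
    0 < 3 * Dq h a b + Nq h a b * (3*b - a) := by
  subst hb
  have : 3 * Dq h a (-3*a) + Nq h a (-3*a) * (3*(-3*a) - a)
      = 3*h^2 + 40*h^2*a^2 + 10*a^4 + 90*h^2*a^4 := by
    unfold Dq Nq; ring
  rw [this]
  nlinarith [pow_pos hh 2, sq_nonneg a, sq_nonneg (a^2), mul_nonneg (sq_nonneg h) (sq_nonneg a), mul_nonneg (sq_nonneg h) (sq_nonneg (a^2))]

/-- A2 : in the region `u ≤ R`, `|τ| ≤ ε(R)`, the derivative of `τ` has an explicit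
positive lower bound. -/
lemma band {h : ℝ} (hh : 0 < h) (R a b : ℝ) (hR : 0 ≤ R)
    (hu : a^2+b^2 ≤ R)
    (ha : a^2 ≤ (h^2/(24*(1+R+h^2)^4))^2) :
    h^2/(2*((1+R)*(h^2+R))) ≤ 1 + kF h a b * b := by
  set B : ℝ := 1+R+h^2 with hBdef
  set ε : ℝ := h^2/(24*B^4) with hεdef
  have hB1 : (1:ℝ) ≤ B := by simp only [hBdef]; nlinarith [sq_nonneg h]
  have hh2B : h^2 ≤ B := by simp only [hBdef]; nlinarith
  have hε0 : 0 < ε := by positivity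
  have hε1 : ε ≤ 1 := by
    rw [hεdef, div_le_one (by positivity)]
    nlinarith [sq_nonneg (B^2 - 1), sq_nonneg (B - 1), hB1, sq_nonneg B]
  have haε : |a| ≤ ε := by
    have := abs_nonneg a
    nlinarith [sq_abs a]
  have ha1 : |a| ≤ 1 := haε.trans hε1
  have hb2B : b^2 ≤ B := by nlinarith [sq_nonneg a]
  have habB : |b| ≤ B := by
    have := abs_nonneg b
    nlinarith [sq_abs b, sq_nonneg (|b| - 1)]
  -- bound on a * Q
  have c1 : |2*h^2*b| ≤ 2*B^2 := by
    rw [abs_mul, abs_of_nonneg (by positivity : (0:ℝ) ≤ 2*h^2)]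
    nlinarith [abs_nonneg b]
  have c2 : |2*h^2*b^3| ≤ 2*B^4 := by
    rw [abs_mul, abs_of_nonneg (by positivity : (0:ℝ) ≤ 2*h^2), abs_pow]
    nlinarith [pow_le_pow_left₀ (abs_nonneg b) habB 3, abs_nonneg b,
      pow_nonneg (abs_nonneg b) 3]
  have c3 : |a*(1+h^2)| ≤ 2*B := by
    rw [abs_mul, abs_of_nonneg (by positivity : (0:ℝ) ≤ 1+h^2)]
    nlinarith [abs_nonneg a]
  have c4 : |2*a*b^2| ≤ 2*B := by
    have he : |2*a*b^2| = 2*(|a|)*b^2 := by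
      rw [abs_mul, abs_mul, abs_two, abs_of_nonneg (sq_nonneg b)]
    rw [he]; nlinarith [abs_nonneg a, sq_nonneg b]
  have c5 : |2*a^2*b| ≤ 2*B := by
    have he : |2*a^2*b| = 2*a^2*(|b|) := by
      rw [abs_mul, abs_mul, abs_two, abs_of_nonneg (sq_nonneg a)]
    have ha2 : a^2 ≤ 1 := by nlinarith [sq_abs a, abs_nonneg a]
    have hm : a^2*(|b|) ≤ 1*B := mul_le_mul ha2 habB (abs_nonneg b) zero_le_one
    rw [he]; linarith
  have c6 : |a^3| ≤ 1 := by
    rw [abs_pow]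
    calc |a|^3 ≤ 1^3 := pow_le_pow_left₀ (abs_nonneg a) ha1 3
    _ = 1 := one_pow 3
  have hQ : |2*h^2*b + 2*h^2*b^3 + a*(1+h^2) + 2*a*b^2 + 2*a^2*b + a^3| ≤ 11*B^4 := by
    have tri1 := abs_add_le (2*h^2*b + 2*h^2*b^3 + a*(1+h^2) + 2*a*b^2 + 2*a^2*b) (a^3)
    have tri2 := abs_add_le (2*h^2*b + 2*h^2*b^3 + a*(1+h^2) + 2*a*b^2) (2*a^2*b)
    have tri3 := abs_add_le (2*h^2*b + 2*h^2*b^3 + a*(1+h^2)) (2*a*b^2)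
    have tri4 := abs_add_le (2*h^2*b + 2*h^2*b^3) (a*(1+h^2))
    have tri5 := abs_add_le (2*h^2*b) (2*h^2*b^3)
    have hBp : B ≤ B^4 := by nlinarith [sq_nonneg (B^2 - 1), sq_nonneg (B - 1), hB1, sq_nonneg B]
    have hBp2 : B^2 ≤ B^4 := by nlinarith [sq_nonneg B, sq_nonneg (B^2 - B), hB1]
    linarith
  have haQ : -(h^2/2) ≤ a*(2*h^2*b + 2*h^2*b^3 + a*(1+h^2) + 2*a*b^2 + 2*a^2*b + a^3) := by
    have h1 : |a*(2*h^2*b + 2*h^2*b^3 + a*(1+h^2) + 2*a*b^2 + 2*a^2*b + a^3)| ≤ ε*(11*B^4) := by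
      rw [abs_mul]
      exact mul_le_mul haε hQ (abs_nonneg _) hε0.le
    have h2 : ε*(24*B^4) = h^2 := by
      rw [hεdef]; field_simp
    have h3 := neg_abs_le (a*(2*h^2*b + 2*h^2*b^3 + a*(1+h^2) + 2*a*b^2 + 2*a^2*b + a^3))
    nlinarith [mul_pos hε0 (by positivity : (0:ℝ) < B^4)]
  have hD := Dq_pos hh a b
  have he : 1 + kF h a b * b =
      (h^2*(1+b^2)^2 + a*(2*h^2*b + 2*h^2*b^3 + a*(1+h^2) + 2*a*b^2 + 2*a^2*b + a^3))
        / Dq h a b := by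
    rw [kF_eq]
    field_simp
    unfold Nq Dq; ring
  have hnum : h^2/2 ≤ h^2*(1+b^2)^2 + a*(2*h^2*b + 2*h^2*b^3 + a*(1+h^2) + 2*a*b^2 + 2*a^2*b + a^3) := by
    nlinarith [sq_nonneg b, sq_nonneg (b^2), pow_pos hh 2]
  have hDM : Dq h a b ≤ (1+R)*(h^2+R) := by
    have hUR : a^2+b^2 ≤ R := hu
    unfold Dq
    nlinarith [mul_nonneg (by linarith : (0:ℝ) ≤ R - (a^2+b^2))
      (by positivity : (0:ℝ) ≤ 1+h^2+R+(a^2+b^2))]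
  rw [he]
  have : h^2/(2*((1+R)*(h^2+R))) = (h^2/2)/((1+R)*(h^2+R)) := by
    rw [div_div]
  rw [this]
  exact div_le_div₀ (by linarith [hnum, pow_pos hh 2]) hnum hD hDM

lemma Fstep {h a b c2 : ℝ} (hh : 0 < h) (ha : 0 < a) (hab : 0 ≤ b + a)
    (hU : 9*(1+h^2) ≤ a^2+b^2) (hc2 : c2 = h^2/(16*(1+h^2))) :
    (-(kF h a b * a) * a - b * (1 + kF h a b * b))/(a^2) + c2 * (2*a/(a^2+b^2)) ≤ 0 := by
  have hD := Dq_pos hh a b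
  have hU0 : (0:ℝ) < a^2+b^2 := by positivity
  have hU1 : (1:ℝ) ≤ a^2+b^2 := by nlinarith [sq_nonneg h]
  have hh2U : h^2 ≤ a^2+b^2 := by nlinarith [sq_nonneg h]
  have hDle : Dq h a b ≤ 4*(a^2+b^2)^2 := by
    unfold Dq
    nlinarith [mul_nonneg (by linarith : (0:ℝ) ≤ a^2+b^2-1)
      (by linarith : (0:ℝ) ≤ a^2+b^2-h^2), sq_nonneg (a^2+b^2)]
  have hZ1 := claim1 hh ha hab hU
  have he : (-(kF h a b * a) * a - b * (1 + kF h a b * b))/(a^2) + c2 * (2*a/(a^2+b^2))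
      = (-(Zq h a b) * (a^2+b^2) + c2 * (2*a) * (Dq h a b * a^2))
        / (Dq h a b * a^2 * (a^2+b^2)) := by
    rw [kF_eq]; unfold Zq
    field_simp
    ring
  rw [he]
  apply div_nonpos_of_nonpos_of_nonneg _ (by positivity)
  have hc2' : c2 * (16*(1+h^2)) = h^2 := by rw [hc2]; field_simp
  have ha2 : a^2 ≤ a^2+b^2 := by nlinarith [sq_nonneg b]
  have hint1 : a^2 * Dq h a b ≤ (a^2+b^2) * (4*(a^2+b^2)^2) :=
    mul_le_mul ha2 hDle hD.le hU0.le
  have k3 : 8*h^2*a*(a^2+b^2)^3 ≤ 16*(1+h^2)*(Zq h a b*(a^2+b^2)) := by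
    nlinarith [mul_nonneg (by linarith [hZ1] :
      (0:ℝ) ≤ 2*(1+h^2)*Zq h a b - h^2*a*(a^2+b^2)^2) hU0.le]
  have k2 : 2*h^2*a*(a^2*Dq h a b) ≤ 8*h^2*a*(a^2+b^2)^3 := by
    nlinarith [mul_le_mul_of_nonneg_left hint1 (by positivity : (0:ℝ) ≤ 2*h^2*a)]
  have k1 : 16*(1+h^2)*(c2 * (2*a) * (Dq h a b * a^2)) = 2*h^2*a*(a^2*Dq h a b) := by
    linear_combination (2*a*(Dq h a b * a^2)) * hc2'
  have hfin : c2 * (2*a) * (Dq h a b * a^2) ≤ Zq h a b * (a^2+b^2) := by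
    have hpos : (0:ℝ) < 16*(1+h^2) := by positivity
    exact le_of_mul_le_mul_left (by linarith) hpos
  linarith

lemma Gstep {h a b : ℝ} (hh : 0 < h) (ha : 0 < a) (hb : b ≤ -3*a)
    (hU : 9*(1+h^2) ≤ a^2+b^2) :
    ((1 + kF h a b * b) * b - a * (-(kF h a b * a)))/(b^2)
      + (h^2/16) * (2*a/(a^2+b^2)) ≤ 0 := by
  have hD := Dq_pos hh a b
  have hb0 : b < 0 := by nlinarith
  have hU0 : (0:ℝ) < a^2+b^2 := by positivity
  have hU1 : (1:ℝ) ≤ a^2+b^2 := by nlinarith [sq_nonneg h]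
  have hh2U : h^2 ≤ a^2+b^2 := by nlinarith [sq_nonneg h]
  have hDle : Dq h a b ≤ 4*(a^2+b^2)^2 := by
    unfold Dq
    nlinarith [mul_nonneg (by linarith : (0:ℝ) ≤ a^2+b^2-1)
      (by linarith : (0:ℝ) ≤ a^2+b^2-h^2), sq_nonneg (a^2+b^2)]
  have q0 := claim2 hh ha hb hU
  have he : ((1 + kF h a b * b) * b - a * (-(kF h a b * a)))/(b^2)
      + (h^2/16) * (2*a/(a^2+b^2))
      = (Zq h a b * (a^2+b^2) + (h^2/16) * (2*a) * (Dq h a b * b^2))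
        / (Dq h a b * b^2 * (a^2+b^2)) := by
    have hbne : b ≠ 0 := ne_of_lt hb0
    have hDne : Dq h a b ≠ 0 := hD.ne'
    have hUne : (a^2+b^2) ≠ 0 := hU0.ne'
    rw [kF_eq]; unfold Zq
    field_simp
    ring
  rw [he]
  apply div_nonpos_of_nonpos_of_nonneg _ (by positivity)
  have q1 : Zq h a b * (a^2+b^2) ≤ h^2*b^3*(a^2+b^2)^2/6 := by
    nlinarith [mul_nonneg (by linarith [q0] :
      (0:ℝ) ≤ h^2*b^3*(a^2+b^2) - 6*Zq h a b) hU0.le]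
  have q2 : a*b^2 ≤ -b^3/3 := by
    nlinarith [mul_le_mul_of_nonneg_right (by linarith : a ≤ -b/3) (sq_nonneg b)]
  have r1 : (a*b^2)*(Dq h a b) ≤ (-b^3/3)*(4*(a^2+b^2)^2) :=
    mul_le_mul q2 hDle hD.le (by nlinarith)
  have q3 : (h^2/16)*(2*a)*(Dq h a b * b^2) ≤ -(h^2*b^3*(a^2+b^2)^2)/6 := by
    have r3 := mul_le_mul_of_nonneg_left r1 (by positivity : (0:ℝ) ≤ h^2/8)
    nlinarith [r3]
  nlinarith [q1, q3]

lemma Xstep {h a b : ℝ} (hh : 0 < h) (heq : b = -a) (hU : 9*(1+h^2) ≤ a^2+b^2) :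
    0 < -((-(kF h a b * a)) + (1 + kF h a b * b)) := by
  have hD := Dq_pos hh a b
  have hbar := X_barrier hh heq hU
  have he : (-(kF h a b * a)) + (1 + kF h a b * b)
      = (Dq h a b + Nq h a b * (b - a))/Dq h a b := by
    rw [kF_eq]; field_simp; ring
  rw [he]
  exact neg_pos.2 (div_neg_of_neg_of_pos hbar hD)

lemma Ystep {h a b : ℝ} (hh : 0 < h) (heq : b = -3*a) :
    0 < (-(kF h a b * a)) + 3*(1 + kF h a b * b) := by
  have hD := Dq_pos hh a b
  have hbar := Y_barrier hh heq
  have he : (-(kF h a b * a)) + 3*(1 + kF h a b * b)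
      = (3*Dq h a b + Nq h a b * (3*b - a))/Dq h a b := by
    rw [kF_eq]; field_simp; ring
  rw [he]
  exact div_pos hbar hD

lemma forward (h : ℝ) (hh : 0 < h) (τ μ : ℝ → ℝ) (hsol : IsSol h τ μ) :
    Tendsto τ atTop atTop ∧ Tendsto μ atTop atBot := by
  have hτ : ∀ s, HasDerivAt τ (1 + kF h (τ s) (μ s) * μ s) s := fun s => (hsol s).1
  have hμ : ∀ s, HasDerivAt μ (-(kF h (τ s) (μ s) * τ s)) s := fun s => (hsol s).2
  have hu : ∀ s, HasDerivAt (fun t => (τ t)^2 + (μ t)^2) (2 * τ s) s := by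
    intro s
    have hd := ((hτ s).pow 2).add ((hμ s).pow 2)
    exact hd.congr_deriv (by ring)
  have hu0 : ∀ s, 0 ≤ (τ s)^2 + (μ s)^2 := fun s => by positivity
  -- STEP 1 : τ is eventually positive
  obtain ⟨s1, hs1⟩ : ∃ s1, ∀ s, s1 ≤ s → 0 < τ s := by
    have hex : ∃ s0, 0 < τ s0 := by
      by_contra hno
      push_neg at hno
      set R := (τ 0)^2 + (μ 0)^2 with hRdef
      have hR0 : 0 ≤ R := hu0 0
      have huR : ∀ s, 0 ≤ s → (τ s)^2 + (μ s)^2 ≤ R :=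
        decay_aux _ (fun t => 2 * τ t) 0 (fun t _ => hu t)
          (fun t _ => by linarith [hno t])
      set ε := h^2/(24*(1+R+h^2)^4) with hεdef
      have hε0 : 0 < ε := by positivity
      set c := h^2/(2*((1+R)*(h^2+R))) with hcdef
      have hc0 : 0 < c := by positivity
      have hband : ∀ s, 0 ≤ s → (τ s)^2 ≤ ε^2 → c ≤ 1 + kF h (τ s) (μ s) * μ s :=
        fun s hs hτs => band hh R (τ s) (μ s) hR0 (huR s hs) hτs
      have hsbar : ∃ sb, 0 ≤ sb ∧ -ε < τ sb := by
        by_contra hnb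
        push_neg at hnb
        have hlin := growth_aux (fun t => -((τ t)^2 + (μ t)^2)) (fun t => -(2*τ t)) 0
          (2*ε) (fun t _ => (hu t).neg)
          (fun t ht => by have := hnb t ht; linarith) ((R+1)/(2*ε))
          (by positivity)
        have h0 := hu0 ((R+1)/(2*ε))
        have hεne : ε ≠ 0 := hε0.ne'
        have heval : 2*ε * ((R+1)/(2*ε) - 0) = R + 1 := by field_simp; ring
        nlinarith [hlin]
      obtain ⟨sb, hsb0, hsbε⟩ := hsbar
      have hstay : ∀ s, sb ≤ s → -ε < τ s := by
        refine stay_above τ _ sb (-ε) (fun s _ => hτ s) hsbε ?_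
        intro s hs h0
        have h2 : (τ s)^2 ≤ ε^2 := le_of_eq (by rw [h0, neg_sq])
        exact lt_of_lt_of_le hc0 (hband s (le_trans hsb0 hs) h2)
      have hgrow := growth_aux τ _ sb c (fun s _ => hτ s)
        (fun s hs => hband s (le_trans hsb0 hs)
          (by nlinarith [hstay s hs, hno s]))
        (sb + (ε + 1)/c)
        (by nlinarith [div_pos (by linarith : (0:ℝ) < ε + 1) hc0])
      have hcne : c ≠ 0 := hc0.ne'
      have heval : c * ((sb + (ε + 1)/c) - sb) = ε + 1 := by field_simp; ring
      nlinarith [hno (sb + (ε + 1)/c), hsbε, hgrow]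
    obtain ⟨s0, hs0⟩ := hex
    exact ⟨s0, stay_above τ _ s0 0 (fun s _ => hτ s) hs0
      (fun s _ h0 => by rw [h0]; exact tau_axis_pos hh (μ s))⟩
  -- STEP 2 : monotonicity of u on [s1, ∞)
  have humono : ∀ s t, s1 ≤ s → s ≤ t →
      (τ s)^2 + (μ s)^2 ≤ (τ t)^2 + (μ t)^2 := by
    intro s t hs hst
    have hg := growth_aux (fun r => (τ r)^2 + (μ r)^2) (fun r => 2*τ r) s 0
      (fun r _ => hu r) (fun r hr => by linarith [hs1 r (le_trans hs hr)]) t hst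
    linarith
  -- STEP 3 : u → ∞
  have hutop : Tendsto (fun s => (τ s)^2 + (μ s)^2) atTop atTop := by
    rw [tendsto_atTop]
    intro M
    have hex : ∃ s, s1 ≤ s ∧ M ≤ (τ s)^2 + (μ s)^2 := by
      by_contra hno
      push_neg at hno
      set R := max M ((τ s1)^2 + (μ s1)^2) with hRdef
      have hR0 : 0 ≤ R := le_trans (hu0 s1) (le_max_right _ _)
      have huR : ∀ s, s1 ≤ s → (τ s)^2 + (μ s)^2 ≤ R := fun s hs =>
        le_trans (hno s hs).le (le_max_left _ _)
      set ε := h^2/(24*(1+R+h^2)^4) with hεdef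
      have hε0 : 0 < ε := by positivity
      set c := h^2/(2*((1+R)*(h^2+R))) with hcdef
      have hc0 : 0 < c := by positivity
      have hτ1 : 0 < τ s1 := hs1 s1 le_rfl
      set b0 := min ε (τ s1) with hb0def
      have hb00 : 0 < b0 := lt_min hε0 hτ1
      have hb0ε : b0 ≤ ε := min_le_left _ _
      have hstay : ∀ s, s1 ≤ s → b0/2 < τ s := by
        refine stay_above τ _ s1 (b0/2) (fun s _ => hτ s)
          (by have := min_le_right ε (τ s1); linarith) ?_
        intro s hs h0
        have h2 : (τ s)^2 ≤ ε^2 := by rw [h0]; nlinarith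
        exact lt_of_lt_of_le hc0 (band hh R (τ s) (μ s) hR0 (huR s hs) h2)
      have hMgt : (τ s1)^2 + (μ s1)^2 < M := hno s1 le_rfl
      set q := (M - ((τ s1)^2 + (μ s1)^2) + 1)/b0 with hqdef
      have hq0 : 0 < q := by
        rw [hqdef]; exact div_pos (by linarith) hb00
      have hgrow := growth_aux (fun r => (τ r)^2 + (μ r)^2) (fun r => 2*τ r) s1 b0
        (fun r _ => hu r) (fun r hr => by linarith [hstay r hr]) (s1 + q)
        (by linarith)
      have hb0ne : b0 ≠ 0 := hb00.ne'
      have heval : b0 * ((s1 + q) - s1) = M - ((τ s1)^2 + (μ s1)^2) + 1 := by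
        rw [hqdef]; field_simp; ring
      nlinarith [hno (s1 + q) (by linarith), hgrow]
    obtain ⟨s, hss1, hsM⟩ := hex
    rw [eventually_atTop]
    exact ⟨s, fun t ht => le_trans hsM (humono s t hss1 ht)⟩
  -- STEP 4 : pick s2 past which u ≥ 9(1+h²)
  obtain ⟨s2, hs2R, hs2s1⟩ : ∃ s2, 9*(1+h^2) ≤ (τ s2)^2+(μ s2)^2 ∧ s1 ≤ s2 :=
    ((hutop.eventually_ge_atTop _).and (eventually_ge_atTop s1)).exists
  have hUge : ∀ s, s2 ≤ s → 9*(1+h^2) ≤ (τ s)^2+(μ s)^2 :=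
    fun s hs => le_trans hs2R (humono s2 s hs2s1 hs)
  have hτpos : ∀ s, s2 ≤ s → 0 < τ s := fun s hs => hs1 s (le_trans hs2s1 hs)
  have hUpos : ∀ s, s2 ≤ s → 0 < (τ s)^2+(μ s)^2 := fun s hs => by
    nlinarith [hUge s hs, sq_nonneg h]
  have hlogtop : Tendsto (fun s => Real.log ((τ s)^2+(μ s)^2)) atTop atTop :=
    Real.tendsto_log_atTop.comp hutop
  -- STEP 5 : eventually μ + τ < 0
  obtain ⟨s3, hs3s2, hs3X⟩ : ∃ s3, s2 ≤ s3 ∧ μ s3 + τ s3 < 0 := by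
    by_contra hno
    push_neg at hno
    set c2 := h^2/(16*(1+h^2)) with hc2def
    have hc20 : 0 < c2 := by positivity
    set F : ℝ → ℝ := fun s => μ s / τ s + c2 * Real.log ((τ s)^2 + (μ s)^2) with hFdef
    set Fd : ℝ → ℝ := fun s =>
      (-(kF h (τ s) (μ s) * τ s) * τ s - μ s * (1 + kF h (τ s) (μ s) * μ s))/(τ s)^2
        + c2 * (2 * τ s / ((τ s)^2 + (μ s)^2)) with hFddef
    have hFder : ∀ s, s2 ≤ s → HasDerivAt F (Fd s) s := by
      intro s hs
      exact ((hμ s).div (hτ s) (hτpos s hs).ne').add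
        (((hu s).log (hUpos s hs).ne').const_mul c2)
    have hFd0 : ∀ s, s2 ≤ s → Fd s ≤ 0 := by
      intro s hs
      exact Fstep hh (hτpos s hs) (hno s hs) (hUge s hs) hc2def
    have hdec := decay_aux F Fd s2 hFder hFd0
    obtain ⟨s, hslog, hss2⟩ :=
      ((hlogtop.eventually_ge_atTop ((F s2 + 2)/c2)).and (eventually_ge_atTop s2)).exists
    have h1 : -1 ≤ μ s / τ s := by
      rw [neg_le, ← neg_div, div_le_one (hτpos s hss2)]
      linarith [hno s hss2]
    have h2 : F s2 + 2 ≤ c2 * Real.log ((τ s)^2 + (μ s)^2) := by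
      rw [div_le_iff₀ hc20] at hslog
      linarith [hslog]
    have h3 : F s ≤ F s2 := hdec s hss2
    have h4 : μ s / τ s + c2 * Real.log ((τ s)^2 + (μ s)^2) ≤ F s2 := h3
    clear_value F Fd c2
    linarith
  -- STEP 6 : μ + τ < 0 from s3 on
  have hX : ∀ s, s3 ≤ s → μ s + τ s < 0 := by
    have hst := stay_above (fun s => -(μ s + τ s))
      (fun s => -((-(kF h (τ s) (μ s) * τ s)) + (1 + kF h (τ s) (μ s) * μ s))) s3 0
      (fun s _ => ((hμ s).add (hτ s)).neg) (by linarith) ?_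
    · intro s hs
      have := hst s hs
      linarith
    · intro s hs h0
      have heq : μ s = -τ s := by linarith
      exact Xstep hh heq (hUge s (le_trans hs3s2 hs))
  -- STEP 7 : eventually μ + 3τ > 0
  obtain ⟨s4, hs4s3, hs4Y⟩ : ∃ s4, s3 ≤ s4 ∧ 0 < μ s4 + 3*τ s4 := by
    by_contra hno
    push_neg at hno
    set G : ℝ → ℝ := fun s => τ s / μ s + (h^2/16) * Real.log ((τ s)^2 + (μ s)^2)
      with hGdef
    set Gd : ℝ → ℝ := fun s =>
      ((1 + kF h (τ s) (μ s) * μ s) * μ s - τ s * (-(kF h (τ s) (μ s) * τ s)))/(μ s)^2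
        + (h^2/16) * (2 * τ s / ((τ s)^2 + (μ s)^2)) with hGddef
    have hμneg : ∀ s, s3 ≤ s → μ s < 0 := by
      intro s hs
      have := hτpos s (le_trans hs3s2 hs)
      nlinarith [hno s hs]
    have hGder : ∀ s, s3 ≤ s → HasDerivAt G (Gd s) s := by
      intro s hs
      exact ((hτ s).div (hμ s) (hμneg s hs).ne).add
        (((hu s).log (hUpos s (le_trans hs3s2 hs)).ne').const_mul (h^2/16))
    have hGd0 : ∀ s, s3 ≤ s → Gd s ≤ 0 := by
      intro s hs
      exact Gstep hh (hτpos s (le_trans hs3s2 hs)) (by linarith [hno s hs])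
        (hUge s (le_trans hs3s2 hs))
    have hdec := decay_aux G Gd s3 hGder hGd0
    obtain ⟨s, hslog, hss3⟩ :=
      ((hlogtop.eventually_ge_atTop ((G s3 + 2)/(h^2/16))).and
        (eventually_ge_atTop s3)).exists
    have hμs : μ s < 0 := hμneg s hss3
    have h1 : -1/3 ≤ τ s / μ s := by
      rw [le_div_iff_of_neg hμs]
      linarith [hno s hss3]
    have h2 : G s3 + 2 ≤ (h^2/16) * Real.log ((τ s)^2 + (μ s)^2) := by
      rw [div_le_iff₀ (by positivity : (0:ℝ) < h^2/16)] at hslog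
      linarith
    have h4 : τ s / μ s + (h^2/16) * Real.log ((τ s)^2 + (μ s)^2) ≤ G s3 :=
      hdec s hss3
    clear_value G Gd
    linarith
  -- STEP 8 : μ + 3τ > 0 from s4 on
  have hY : ∀ s, s4 ≤ s → 0 < μ s + 3*τ s := by
    refine stay_above (fun s => μ s + 3*τ s)
      (fun s => (-(kF h (τ s) (μ s) * τ s)) + 3*(1 + kF h (τ s) (μ s) * μ s)) s4 0
      (fun s _ => (hμ s).add ((hτ s).const_mul 3)) hs4Y ?_
    intro s _ h0
    have heq : μ s = -3*τ s := by linarith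
    exact Ystep hh heq
  have hs1s4 : s1 ≤ s4 := by linarith [hs2s1, hs3s2, hs4s3]
  have hXs : ∀ s, s4 ≤ s → μ s + τ s < 0 := fun s hs => hX s (le_trans hs4s3 hs)
  -- STEP 9 : conclusions
  constructor
  · rw [tendsto_atTop]
    intro M
    obtain ⟨s5, hs5u, hs5s4⟩ :=
      ((hutop.eventually_ge_atTop (10*M^2+10)).and (eventually_ge_atTop s4)).exists
    rw [eventually_atTop]
    refine ⟨s5, fun s hs => ?_⟩
    have hs4le : s4 ≤ s := le_trans hs5s4 hs
    have hu10 : 10*M^2+10 ≤ (τ s)^2+(μ s)^2 :=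
      le_trans hs5u (humono s5 s (le_trans hs1s4 hs5s4) hs)
    have hτs : 0 < τ s := hτpos s (by linarith [hs3s2, hs4s3])
    have hXs' := hXs s hs4le
    have hYs := hY s hs4le
    have h9 : (μ s)^2 < 9*(τ s)^2 := by
      nlinarith [mul_pos hYs (show (0:ℝ) < 3*τ s - μ s by nlinarith)]
    have hτ2 : M^2+1 ≤ (τ s)^2 := by nlinarith
    nlinarith [hτ2, hτs, sq_nonneg (τ s - M), sq_nonneg (τ s + M)]
  · rw [tendsto_atBot]
    intro M
    obtain ⟨s5, hs5u, hs5s4⟩ :=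
      ((hutop.eventually_ge_atTop (2*M^2+2)).and (eventually_ge_atTop s4)).exists
    rw [eventually_atTop]
    refine ⟨s5, fun s hs => ?_⟩
    have hs4le : s4 ≤ s := le_trans hs5s4 hs
    have hu2 : 2*M^2+2 ≤ (τ s)^2+(μ s)^2 :=
      le_trans hs5u (humono s5 s (le_trans hs1s4 hs5s4) hs)
    have hτs : 0 < τ s := hτpos s (by linarith [hs3s2, hs4s3])
    have hXs' := hXs s hs4le
    have hμ2 : M^2+1 ≤ (μ s)^2 := by nlinarith
    have hμneg : μ s < 0 := by nlinarith
    nlinarith [hμ2, hμneg, sq_nonneg (μ s - M), sq_nonneg (μ s + M)]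

lemma kF_odd (h a b : ℝ) : kF h (-a) (-b) = -kF h a b := by
  unfold kF
  rw [show (2 * ((-a) ^ 2 + h ^ 2 * (1 + (-b) ^ 2)) * (-a) + (h ^ 2 - 1) * (1 + (-b) ^ 2) * (-b))
      = -(2 * (a ^ 2 + h ^ 2 * (1 + b ^ 2)) * a + (h ^ 2 - 1) * (1 + b ^ 2) * b) from by ring,
    show ((1 + ((-a) ^ 2 + (-b) ^ 2)) * (h ^ 2 + ((-a) ^ 2 + (-b) ^ 2)))
      = ((1 + (a ^ 2 + b ^ 2)) * (h ^ 2 + (a ^ 2 + b ^ 2))) from by ring, neg_div]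

lemma reflect (h : ℝ) (τ μ : ℝ → ℝ) (hsol : IsSol h τ μ) :
    IsSol h (fun s => -τ (-s)) (fun s => -μ (-s)) := by
  intro s
  have h1 := (hsol (-s)).1
  have h2 := (hsol (-s)).2
  have hn : HasDerivAt (fun t : ℝ => -t) (-1 : ℝ) s := by
    exact (hasDerivAt_id s).neg
  constructor
  · have hc := (h1.comp s hn).neg
    refine hc.congr_deriv ?_
    · rw [kF_odd]; ring
  · have hc := (h2.comp s hn).neg
    refine hc.congr_deriv ?_
    · rw [kF_odd]; ring

/-- along any global solution of the rotator ODE system, the limits of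
`τ` and `μ` at `±∞` exist; in fact `τ(s) → ±∞` and `μ(s) → ∓∞` as `s → ±∞`. -/
theorem tau_mu_limits (h : ℝ) (hh : 0 < h) (τ μ : ℝ → ℝ)
    (hsol : IsSol h τ μ) :
    Tendsto τ atTop atTop ∧ Tendsto τ atBot atBot ∧
    Tendsto μ atTop atBot ∧ Tendsto μ atBot atTop := by
  obtain ⟨h1, h2⟩ := forward h hh τ μ hsol
  obtain ⟨h3, h4⟩ := forward h hh _ _ (reflect h τ μ hsol)
  refine ⟨h1, ?_, h2, ?_⟩
  · have : Tendsto (fun s => -(-τ (-(-s)))) atBot atBot := by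
      exact tendsto_neg_atTop_atBot.comp (h3.comp tendsto_neg_atBot_atTop)
    simpa using this
  · have : Tendsto (fun s => -(-μ (-(-s)))) atBot atTop := by
      exact tendsto_neg_atBot_atTop.comp (h4.comp tendsto_neg_atBot_atTop)
    simpa using this
end

section
/- If (τ(s), μ(s)) is a solution of the rotator ODE system (pitch h > 0) along which μ(s)² → +∞ with τ(s) bounded along a sequence s_n → +∞, then k(τ(s_n), μ(s_n))·μ(s_n) → h² − 1 and hence τ'(s_n) → h² as n → ∞. -/
set_option maxHeartbeats 1000000

open Filter

lemma kF_key (h C : ℝ) (hh : 0 < h) (hC : 0 ≤ C) :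
    ∃ K : ℝ, ∀ t u : ℝ, |t| ≤ C → 1 ≤ |u| →
      |kF h t u * u - (h ^ 2 - 1)| ≤ K / |u| := by
  set d := |h ^ 2 - 1| with hd
  refine ⟨2 * C * (C ^ 2 + 2 * h ^ 2) + d * (2 * h ^ 2 + (1 + h ^ 2) * C ^ 2 + C ^ 4 + 3 * C ^ 2),
    fun t u ht hu => ?_⟩
  have ht0 : 0 ≤ |t| := abs_nonneg t
  have hu0 : (0:ℝ) < |u| := lt_of_lt_of_le one_pos hu
  have hD : (0:ℝ) < (1 + (t ^ 2 + u ^ 2)) * (h ^ 2 + (t ^ 2 + u ^ 2)) := by positivity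
  have hNe : kF h t u * u - (h ^ 2 - 1) =
      (2 * (t ^ 2 + h ^ 2 * (1 + u ^ 2)) * t * u
        - (h ^ 2 - 1) * (h ^ 2 + (1 + h ^ 2) * t ^ 2 + h ^ 2 * u ^ 2 + t ^ 4 + 2 * t ^ 2 * u ^ 2))
        / ((1 + (t ^ 2 + u ^ 2)) * (h ^ 2 + (t ^ 2 + u ^ 2))) := by
    rw [kF]; field_simp; ring
  rw [hNe, abs_div, abs_of_pos hD, div_le_div_iff₀ hD hu0]
  have hN : |2 * (t ^ 2 + h ^ 2 * (1 + u ^ 2)) * t * u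
        - (h ^ 2 - 1) * (h ^ 2 + (1 + h ^ 2) * t ^ 2 + h ^ 2 * u ^ 2 + t ^ 4 + 2 * t ^ 2 * u ^ 2)|
      ≤ 2 * (t ^ 2 + h ^ 2 * (1 + u ^ 2)) * |t| * |u|
        + d * (h ^ 2 + (1 + h ^ 2) * t ^ 2 + h ^ 2 * u ^ 2 + t ^ 4 + 2 * t ^ 2 * u ^ 2) := by
    refine (abs_sub _ _).trans ?_
    rw [abs_mul, abs_mul, abs_mul, abs_mul, abs_two,
      abs_of_nonneg (show (0:ℝ) ≤ t ^ 2 + h ^ 2 * (1 + u ^ 2) by positivity),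
      abs_of_nonneg (show (0:ℝ) ≤ h ^ 2 + (1 + h ^ 2) * t ^ 2 + h ^ 2 * u ^ 2 + t ^ 4
        + 2 * t ^ 2 * u ^ 2 by positivity)]
  refine le_trans (mul_le_mul_of_nonneg_right hN (le_of_lt hu0)) ?_
  have hd0 : 0 ≤ d := abs_nonneg _
  have hsq : t ^ 2 = |t| ^ 2 := (sq_abs t).symm
  have hsq4 : t ^ 4 = |t| ^ 4 := by
    rw [← abs_pow]; exact (abs_of_nonneg (by positivity)).symm
  have hqu : u ^ 2 = |u| ^ 2 := (sq_abs u).symm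
  rw [hsq, hsq4, hqu]
  set a := |t| with ha
  set b := |u| with hb'
  clear_value a b
  clear hN hNe hsq hsq4 hqu hD
  have hb : 1 ≤ b := hu
  have hb0 : (0:ℝ) < b := hu0
  have ha2 : a ^ 2 ≤ C ^ 2 := by nlinarith
  have ha4 : a ^ 4 ≤ C ^ 4 := by nlinarith
  have hb24 : b ^ 2 ≤ b ^ 4 := by nlinarith [mul_nonneg (mul_nonneg (sq_nonneg b) (sub_nonneg.2 hb)) (by linarith : (0:ℝ) ≤ b + 1)]
  have hb34 : b ^ 3 ≤ b ^ 4 := by nlinarith [mul_nonneg (mul_nonneg hb0.le (sq_nonneg b)) (sub_nonneg.2 hb)]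
  have hb14 : b ≤ b ^ 4 := le_trans (by nlinarith) hb24
  have stepA : 2 * (a ^ 2 + h ^ 2 * (1 + b ^ 2)) * a * b * b
      ≤ 2 * C * (C ^ 2 + 2 * h ^ 2) * b ^ 4 := by
    have h1 : 2 * (a ^ 2 + h ^ 2 * (1 + b ^ 2)) * a * b * b
        = 2 * a * ((a ^ 2 + h ^ 2) * b ^ 2 + h ^ 2 * b ^ 4) := by ring
    have h2 : (a ^ 2 + h ^ 2) * b ^ 2 + h ^ 2 * b ^ 4 ≤ (C ^ 2 + 2 * h ^ 2) * b ^ 4 := by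
      nlinarith [mul_le_mul_of_nonneg_right ha2 (sq_nonneg b)]
    have h3 : 2 * a * ((a ^ 2 + h ^ 2) * b ^ 2 + h ^ 2 * b ^ 4)
        ≤ 2 * C * ((C ^ 2 + 2 * h ^ 2) * b ^ 4) := by
      have hpos : 0 ≤ (a ^ 2 + h ^ 2) * b ^ 2 + h ^ 2 * b ^ 4 := by positivity
      have := mul_le_mul (by linarith : 2 * a ≤ 2 * C) h2 hpos (by linarith)
      linarith
    rw [h1]; linarith
  have stepB : d * (h ^ 2 + (1 + h ^ 2) * a ^ 2 + h ^ 2 * b ^ 2 + a ^ 4 + 2 * a ^ 2 * b ^ 2) * b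
      ≤ d * (2 * h ^ 2 + (1 + h ^ 2) * C ^ 2 + C ^ 4 + 3 * C ^ 2) * b ^ 4 := by
    have f1 : a ^ 2 * b ≤ C ^ 2 * b ^ 4 :=
      le_trans (mul_le_mul_of_nonneg_right ha2 hb0.le)
        (mul_le_mul_of_nonneg_left hb14 (sq_nonneg C))
    have f2 : (1 + h ^ 2) * (a ^ 2 * b) ≤ (1 + h ^ 2) * (C ^ 2 * b ^ 4) :=
      mul_le_mul_of_nonneg_left f1 (by positivity)
    have f3 : h ^ 2 * b ≤ h ^ 2 * b ^ 4 := mul_le_mul_of_nonneg_left hb14 (sq_nonneg h)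
    have f4 : h ^ 2 * b ^ 3 ≤ h ^ 2 * b ^ 4 := mul_le_mul_of_nonneg_left hb34 (sq_nonneg h)
    have f5 : a ^ 4 * b ≤ C ^ 4 * b ^ 4 :=
      le_trans (mul_le_mul_of_nonneg_right ha4 hb0.le)
        (mul_le_mul_of_nonneg_left hb14 (by positivity))
    have f6 : a ^ 2 * b ^ 3 ≤ C ^ 2 * b ^ 4 :=
      le_trans (mul_le_mul_of_nonneg_right ha2 (by positivity))
        (mul_le_mul_of_nonneg_left hb34 (sq_nonneg C))
    have f7 : (0:ℝ) ≤ C ^ 2 * b ^ 4 := by positivity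
    have h2 : (h ^ 2 + (1 + h ^ 2) * a ^ 2 + h ^ 2 * b ^ 2 + a ^ 4 + 2 * a ^ 2 * b ^ 2) * b
        ≤ (2 * h ^ 2 + (1 + h ^ 2) * C ^ 2 + C ^ 4 + 3 * C ^ 2) * b ^ 4 := by
      nlinarith [f2, f3, f4, f5, f6, f7]
    calc d * (h ^ 2 + (1 + h ^ 2) * a ^ 2 + h ^ 2 * b ^ 2 + a ^ 4 + 2 * a ^ 2 * b ^ 2) * b
        = d * ((h ^ 2 + (1 + h ^ 2) * a ^ 2 + h ^ 2 * b ^ 2 + a ^ 4 + 2 * a ^ 2 * b ^ 2) * b) := by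
          ring
      _ ≤ d * ((2 * h ^ 2 + (1 + h ^ 2) * C ^ 2 + C ^ 4 + 3 * C ^ 2) * b ^ 4) :=
          mul_le_mul_of_nonneg_left h2 hd0
      _ = d * (2 * h ^ 2 + (1 + h ^ 2) * C ^ 2 + C ^ 4 + 3 * C ^ 2) * b ^ 4 := by ring
  have hDb : b ^ 4 ≤ (1 + (a ^ 2 + b ^ 2)) * (h ^ 2 + (a ^ 2 + b ^ 2)) := by nlinarith
  have hK0 : 0 ≤ 2 * C * (C ^ 2 + 2 * h ^ 2)
      + d * (2 * h ^ 2 + (1 + h ^ 2) * C ^ 2 + C ^ 4 + 3 * C ^ 2) := by positivity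
  nlinarith [mul_le_mul_of_nonneg_left hDb hK0]

/-- if along a solution `μ(sₙ)² → +∞` with `τ(sₙ)` bounded on a
sequence `sₙ → +∞`, then `k(τ(sₙ), μ(sₙ))·μ(sₙ) → h² − 1` and `τ′(sₙ) → h²`. -/
theorem asymptotic_k_mu (h : ℝ) (hh : 0 < h) (τ μ : ℝ → ℝ)
    (hsol : IsSol h τ μ) (sn : ℕ → ℝ)
    (hsn : Tendsto sn atTop atTop)
    (hmu : Tendsto (fun n => (μ (sn n)) ^ 2) atTop atTop)
    (htau : ∃ C : ℝ, ∀ n : ℕ, |τ (sn n)| ≤ C) :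
    Tendsto (fun n => kF h (τ (sn n)) (μ (sn n)) * μ (sn n)) atTop
      (nhds (h ^ 2 - 1)) ∧
    Tendsto (fun n => deriv τ (sn n)) atTop (nhds (h ^ 2)) := by
  obtain ⟨C, hC⟩ := htau
  have hC0 : 0 ≤ C := le_trans (abs_nonneg _) (hC 0)
  obtain ⟨K, hK⟩ := kF_key h C hh hC0
  have habs : Tendsto (fun n => |μ (sn n)|) atTop atTop := by
    rw [tendsto_atTop_atTop]
    intro c
    obtain ⟨N, hN⟩ := (tendsto_atTop_atTop.mp hmu) (c ^ 2 + c ^ 2 + 1)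
    refine ⟨N, fun n hn => ?_⟩
    have h1 := hN n hn
    have h2 : |μ (sn n)| ^ 2 = μ (sn n) ^ 2 := sq_abs _
    nlinarith [abs_nonneg (μ (sn n)), sq_nonneg (|μ (sn n)| - c)]
  have hev : ∀ᶠ n in atTop, 1 ≤ |μ (sn n)| := habs.eventually_ge_atTop 1
  have h0 : Tendsto (fun n => kF h (τ (sn n)) (μ (sn n)) * μ (sn n) - (h ^ 2 - 1))
      atTop (nhds 0) := by
    have hbnd : ∀ᶠ n in atTop,
        ‖kF h (τ (sn n)) (μ (sn n)) * μ (sn n) - (h ^ 2 - 1)‖ ≤ K / |μ (sn n)| :=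
      hev.mono fun n hn => by rw [Real.norm_eq_abs]; exact hK _ _ (hC n) hn
    exact squeeze_zero_norm' hbnd (tendsto_const_nhds.div_atTop habs)
  have part1 := tendsto_sub_nhds_zero_iff.mp h0
  refine ⟨part1, ?_⟩
  have hder : ∀ n : ℕ, deriv τ (sn n) = 1 + kF h (τ (sn n)) (μ (sn n)) * μ (sn n) :=
    fun n => (hsol (sn n)).1.deriv
  have h1 : Tendsto (fun n => 1 + kF h (τ (sn n)) (μ (sn n)) * μ (sn n)) atTop
      (nhds (1 + (h ^ 2 - 1))) := tendsto_const_nhds.add part1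
  rw [show (1:ℝ) + (h ^ 2 - 1) = h ^ 2 by ring] at h1
  exact (tendsto_congr hder).mpr h1
end

section
/- Let h > 0 and let (τ, μ) be a global solution of the rotator ODE system with lim_{s→±∞} τ(s) = ±∞ and lim_{s→±∞} μ(s) = ∓∞. Then the function ν := −τ/μ is bounded on the complement of some compact interval, and its derivative satisfies ν' = −(μ + k·r²)/μ² wherever μ ≠ 0. -/
open Filter

/-! Along a solution, `ν = −τ/μ` has derivative `−(μ + k r²)/μ²`. Where `μ ≤ −1` and `ν ≥ 1`,
the numerator `μ + k r²` is positive: over the common denominator it is `h²` times a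
nonnegative polynomial plus `τ² r² (2τ + μ)`. So once `μ ≤ −1`, `ν` decreases whenever it
reaches the level `max (ν a) 1`, and a barrier argument keeps it below that level. The
reflection `(τ, μ) ↦ (s ↦ −τ(−s), s ↦ −μ(−s))` maps solutions to solutions and preserves `ν`,
which transfers the bound from `+∞` to `−∞`. -/

noncomputable def nu (τ μ : ℝ → ℝ) (s : ℝ) : ℝ := -τ s / μ s

lemma kF_neg_neg (h τ μ : ℝ) : kF h (-τ) (-μ) = -kF h τ μ := by
  unfold kF
  rw [← neg_div]
  congr 1 <;> ring

lemma add_kF_mul_pos {h τ μ : ℝ} (hμ : μ ≤ -1) (hτ : -μ ≤ τ) :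
    0 < μ + kF h τ μ * (τ ^ 2 + μ ^ 2) := by
  obtain ⟨m, rfl⟩ : ∃ m, μ = -m := ⟨-μ, (neg_neg μ).symm⟩
  rw [neg_neg] at hτ
  have hm : 1 ≤ m := by linarith
  have hr2 : m ^ 2 ≤ τ ^ 2 + m ^ 2 := le_add_of_nonneg_left (sq_nonneg τ)
  have hcoeff : 0 ≤ (1 + m ^ 2) * (2 * τ - m) * (τ ^ 2 + m ^ 2) - m * (1 + (τ ^ 2 + m ^ 2)) := by
    have hm2 : 1 ≤ m ^ 2 := one_le_pow₀ hm
    have : 1 ≤ m ^ 2 * (τ ^ 2 + m ^ 2) := one_le_mul_of_one_le_of_one_le hm2 (hm2.trans hr2)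
    nlinarith [mul_le_mul_of_nonneg_left (by linarith : m ≤ 2 * τ - m)
      (by positivity : 0 ≤ (1 + m ^ 2) * (τ ^ 2 + m ^ 2))]
  have hfree : 0 < τ ^ 2 * (τ ^ 2 + m ^ 2) * (2 * τ - m) := by
    have hτ0 : 0 < τ := by linarith
    have : 0 < 2 * τ - m := by linarith
    positivity
  have hD : 0 < (1 + (τ ^ 2 + m ^ 2)) * (h ^ 2 + (τ ^ 2 + m ^ 2)) := by positivity
  have key : -m + kF h τ (-m) * (τ ^ 2 + (-m) ^ 2) =
      (h ^ 2 * ((1 + m ^ 2) * (2 * τ - m) * (τ ^ 2 + m ^ 2) - m * (1 + (τ ^ 2 + m ^ 2))) +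
        τ ^ 2 * (τ ^ 2 + m ^ 2) * (2 * τ - m)) /
        ((1 + (τ ^ 2 + m ^ 2)) * (h ^ 2 + (τ ^ 2 + m ^ 2))) := by
    rw [kF, neg_sq, eq_div_iff hD.ne']
    field_simp
    ring
  rw [key]
  positivity

namespace IsSol

variable {h : ℝ} {τ μ : ℝ → ℝ}

lemma hasDerivAt_nu (hsol : IsSol h τ μ) {s : ℝ} (hμ : μ s ≠ 0) :
    HasDerivAt (nu τ μ) (-((μ s + kF h (τ s) (μ s) * (τ s ^ 2 + μ s ^ 2)) / μ s ^ 2)) s := by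
  refine ((hsol s).1.neg.div (hsol s).2 hμ).congr_deriv ?_
  field_simp
  simp only [Pi.neg_apply]
  ring

lemma reflect (hsol : IsSol h τ μ) : IsSol h (fun s => -τ (-s)) (fun s => -μ (-s)) := by
  intro s
  have hk : kF h (-τ (-s)) (-μ (-s)) = -kF h (τ (-s)) (μ (-s)) := kF_neg_neg h _ _
  refine ⟨((hsol (-s)).1.comp s (hasDerivAt_neg s)).neg.congr_deriv ?_,
    ((hsol (-s)).2.comp s (hasDerivAt_neg s)).neg.congr_deriv ?_⟩ <;>
  · rw [hk]
    ring

lemma nu_le_max_of_le (hsol : IsSol h τ μ) {a : ℝ}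
    (hμ : ∀ s, a ≤ s → μ s ≤ -1) {s : ℝ} (hs : a ≤ s) :
    nu τ μ s ≤ max (nu τ μ a) 1 := by
  have hμ0 : ∀ x, a ≤ x → μ x ≠ 0 := fun x hx => by linarith [hμ x hx]
  refine image_le_of_deriv_right_lt_deriv_boundary (B := fun _ => max (nu τ μ a) 1)
    (fun x hx => (hsol.hasDerivAt_nu (hμ0 x hx.1)).continuousAt.continuousWithinAt)
    (fun x hx => (hsol.hasDerivAt_nu (hμ0 x hx.1)).hasDerivWithinAt) (le_max_left _ _)
    (fun x => hasDerivAt_const x _) (fun x hx hνx => ?_) ⟨hs, le_rfl⟩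
  have hμx := hμ x hx.1
  have hν1 : 1 ≤ nu τ μ x := hνx ▸ le_max_right _ _
  have hτx : -μ x ≤ τ x := by
    rw [nu, le_div_iff_of_neg (by linarith)] at hν1
    linarith
  exact neg_neg_of_pos (div_pos (add_kF_mul_pos hμx hτx) (sq_pos_iff.2 (hμ0 x hx.1)))

lemma exists_abs_nu_le_of_tendsto_atTop (hsol : IsSol h τ μ)
    (hτ : Tendsto τ atTop atTop) (hμ : Tendsto μ atTop atBot) :
    ∃ a C : ℝ, ∀ s, a ≤ s → |nu τ μ s| ≤ C := by
  obtain ⟨a, ha⟩ := eventually_atTop.1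
    ((hτ.eventually_ge_atTop 0).and (hμ.eventually_le_atBot (-1)))
  refine ⟨a, max (nu τ μ a) 1, fun s hs => abs_le.2 ⟨?_, ?_⟩⟩
  · have : 0 ≤ nu τ μ s :=
      div_nonneg_of_nonpos (neg_nonpos.2 (ha s hs).1) (by linarith [(ha s hs).2])
    linarith [le_max_right (nu τ μ a) 1]
  · exact hsol.nu_le_max_of_le (fun s hs => (ha s hs).2) hs

end IsSol

theorem nu_bounded_and_derivative_general (h : ℝ) (τ μ : ℝ → ℝ)
    (hsol : IsSol h τ μ)
    (hτtop : Tendsto τ atTop atTop) (hτbot : Tendsto τ atBot atBot)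
    (hμtop : Tendsto μ atTop atBot) (hμbot : Tendsto μ atBot atTop) :
    (∃ a b C : ℝ, ∀ s : ℝ, s ∉ Set.Icc a b → |(-(τ s)) / μ s| ≤ C) ∧
    (∀ s : ℝ, μ s ≠ 0 →
      deriv (fun s => (-(τ s)) / μ s) s =
        -((μ s + kF h (τ s) (μ s) * (τ s ^ 2 + μ s ^ 2)) / (μ s) ^ 2)) := by
  refine ⟨?_, fun s hμ => (hsol.hasDerivAt_nu hμ).deriv⟩
  obtain ⟨a₁, C₁, hright⟩ := hsol.exists_abs_nu_le_of_tendsto_atTop hτtop hμtop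
  obtain ⟨a₂, C₂, hleft⟩ := hsol.reflect.exists_abs_nu_le_of_tendsto_atTop
    (tendsto_neg_atBot_atTop.comp (hτbot.comp tendsto_neg_atTop_atBot))
    (tendsto_neg_atTop_atBot.comp (hμbot.comp tendsto_neg_atTop_atBot))
  refine ⟨-a₂, a₁, max C₁ C₂, fun s hs => ?_⟩
  rcases not_and_or.1 hs with hs | hs
  · have := hleft (-s) (by linarith [not_le.1 hs])
    simp only [nu, neg_neg, div_neg, neg_div] at this ⊢
    exact this.trans (le_max_right _ _)
  · exact (hright s (not_le.1 hs).le).trans (le_max_left _ _)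

/-- along a global solution with `τ → ±∞` and `μ → ∓∞` as `s → ±∞`,
the function `ν = −τ/μ` is bounded outside some compact interval, and
`ν′ = −(μ + k r²)/μ²` wherever `μ ≠ 0`. -/
theorem nu_bounded_and_derivative (h : ℝ) (hh : 0 < h) (τ μ : ℝ → ℝ)
    (hsol : IsSol h τ μ)
    (hτtop : Tendsto τ atTop atTop) (hτbot : Tendsto τ atBot atBot)
    (hμtop : Tendsto μ atTop atBot) (hμbot : Tendsto μ atBot atTop) :
    (∃ a b C : ℝ, ∀ s : ℝ, s ∉ Set.Icc a b → |(-(τ s)) / μ s| ≤ C) ∧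
    (∀ s : ℝ, μ s ≠ 0 →
      deriv (fun s => (-(τ s)) / μ s) s =
        -((μ s + kF h (τ s) (μ s) * (τ s ^ 2 + μ s ^ 2)) / (μ s) ^ 2)) :=
  nu_bounded_and_derivative_general h τ μ hsol hτtop hτbot hμtop hμbot
end
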